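/- arXiv:math/0306187 — 8 statements merged into one kernel-verified Lean document; each statement's English description precedes it below -/
import Mathlib

section
/- Let L, L̃ : [a,b] → Sym(V) be smooth curves of symmetric operators on a finite-dimensional real inner product space related by cogredience: L(t) = M(t)* L̃(t) M(t) for a smooth curve M : [a,b] → GL(V). If t₀ ∈ (a,b) is an isolated degeneracy instant for both curves, then M(t₀) maps W_k(L, t₀) onto W_k(L̃, t₀) for all k, and B_k(L, t₀) is the pullback of B_k(L̃, t₀) by M(t₀); in particular L and L̃ have the same partial signatures n_k^±, σ_k at t₀. -/
open scoped RealInnerProductSpace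

/-- A root function of order at least `k` for the curve `L` at `t₀`: a smooth map `u` with
`u t₀ ∈ Ker (L t₀)` such that `t ↦ L t (u t)` vanishes to order at least `k` at `t₀`. -/
def IsRootFn {E : Type*} [NormedAddCommGroup E] [InnerProductSpace ℝ E]
    (L : ℝ → E →L[ℝ] E) (t₀ : ℝ) (k : ℕ) (u : ℝ → E) : Prop :=
  ContDiff ℝ (⊤ : ℕ∞) u ∧ L t₀ (u t₀) = 0 ∧
    ∀ j < k, iteratedDeriv j (fun t => L t (u t)) t₀ = 0

/-- `Wk L t₀ k` is the set of values `u t₀` of root functions of order at least `k`. -/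
def Wk {E : Type*} [NormedAddCommGroup E] [InnerProductSpace ℝ E]
    (L : ℝ → E →L[ℝ] E) (t₀ : ℝ) (k : ℕ) : Set E :=
  {u₀ | ∃ u : ℝ → E, IsRootFn L t₀ k u ∧ u t₀ = u₀}

/-- The coindex of (the restriction to `W` of) a form `B`: the largest dimension of a
subspace contained in `W` on which `B` is positive definite. -/
noncomputable def posIndexOn {V : Type*} [AddCommGroup V] [Module ℝ V]
    (B : V → V → ℝ) (W : Set V) : ℕ :=
  sSup {n : ℕ | ∃ S : Submodule ℝ V, (S : Set V) ⊆ W ∧ Module.finrank ℝ S = n ∧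
    ∀ x ∈ S, x ≠ 0 → 0 < B x x}

/-- The index of (the restriction to `W` of) a form `B`. -/
noncomputable def negIndexOn {V : Type*} [AddCommGroup V] [Module ℝ V]
    (B : V → V → ℝ) (W : Set V) : ℕ :=
  sSup {n : ℕ | ∃ S : Submodule ℝ V, (S : Set V) ⊆ W ∧ Module.finrank ℝ S = n ∧
    ∀ x ∈ S, x ≠ 0 → B x x < 0}

open scoped ContDiff

section AuxLemmas

variable {E : Type*} [NormedAddCommGroup E] [InnerProductSpace ℝ E]

lemma iteratedDeriv_add_apply'' {n : ℕ} {f g : ℝ → E} (hf : ContDiff ℝ n f)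
    (hg : ContDiff ℝ n g) (x : ℝ) :
    iteratedDeriv n (fun t => f t + g t) x = iteratedDeriv n f x + iteratedDeriv n g x := by
  rw [← iteratedDerivWithin_univ, ← iteratedDerivWithin_univ, ← iteratedDerivWithin_univ]
  exact iteratedDerivWithin_add (Set.mem_univ x) uniqueDiffOn_univ hf.contDiffWithinAt hg.contDiffWithinAt

lemma leibniz_aux (t₀ : ℝ) :
    ∀ (k : ℕ) (A : ℝ → E →L[ℝ] E) (f : ℝ → E), ContDiff ℝ ∞ A → ContDiff ℝ ∞ f →
      (∀ j < k, iteratedDeriv j f t₀ = 0) →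
      (∀ j < k, iteratedDeriv j (fun t => A t (f t)) t₀ = 0) ∧
        iteratedDeriv k (fun t => A t (f t)) t₀ = A t₀ (iteratedDeriv k f t₀) := by
  intro k
  induction k with
  | zero =>
      intro A f hA hf h
      exact ⟨fun j hj => absurd hj (Nat.not_lt_zero j), by simp [iteratedDeriv_zero]⟩
  | succ k ih =>
      intro A f hA hf h
      have hAd : Differentiable ℝ A := hA.differentiable (by simp)
      have hfd : Differentiable ℝ f := hf.differentiable (by simp)
      have hA' : ContDiff ℝ ∞ (deriv A) := (contDiff_infty_iff_deriv.mp hA).2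
      have hf' : ContDiff ℝ ∞ (deriv f) := (contDiff_infty_iff_deriv.mp hf).2
      have hg : deriv (fun t => A t (f t)) = fun t => deriv A t (f t) + A t (deriv f t) :=
        funext fun t => deriv_clm_apply (hAd t) (hfd t)
      have h1 := ih (deriv A) f hA' hf (fun j hj => h j (hj.trans (Nat.lt_succ_self k)))
      have h2 := ih A (deriv f) hA hf' (fun j hj => by
        rw [← iteratedDeriv_succ']
        exact h (j + 1) (Nat.succ_lt_succ hj))
      have hsum : ∀ j : ℕ, iteratedDeriv j (deriv fun t => A t (f t)) t₀ =
          iteratedDeriv j (fun t => deriv A t (f t)) t₀ +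
            iteratedDeriv j (fun t => A t (deriv f t)) t₀ := by
        intro j
        rw [hg]
        exact iteratedDeriv_add_apply'' ((hA'.clm_apply hf).of_le (by exact_mod_cast le_top))
          ((hA.clm_apply hf').of_le (by exact_mod_cast le_top)) t₀
      constructor
      · intro j hj
        match j with
        | 0 =>
            have h0 : f t₀ = 0 := by simpa using h 0 (Nat.succ_pos k)
            simp [iteratedDeriv_zero, h0]
        | (j + 1) =>
            have hj' : j < k := Nat.lt_of_succ_lt_succ hj
            rw [iteratedDeriv_succ', hsum j, h1.1 j hj', h2.1 j hj', add_zero]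
      · rw [iteratedDeriv_succ', hsum k, h1.2, h2.2, h k (Nat.lt_succ_self k), map_zero,
          zero_add, ← iteratedDeriv_succ']

end AuxLemmas

/-- The adjoint, as a continuous linear map on operators. -/
noncomputable def adjCLM (E : Type*) [NormedAddCommGroup E] [InnerProductSpace ℝ E]
    [FiniteDimensional ℝ E] : (E →L[ℝ] E) →L[ℝ] (E →L[ℝ] E) :=
  LinearMap.mkContinuous
    { toFun := fun T => ContinuousLinearMap.adjoint T
      map_add' := fun A B => map_add _ A B
      map_smul' := fun r A => by simp }
    1 (fun A => by
      rw [one_mul]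
      exact le_of_eq (ContinuousLinearMap.adjoint.norm_map A))

/-- **Invariance of the partial signatures under cogredience.**
If `L(t) = M(t)* L'(t) M(t)` for a smooth curve of isomorphisms `M`, and `t₀` is an
isolated degeneracy instant for both curves, then `M(t₀)` maps `W_k(L,t₀)` onto
`W_k(L',t₀)` and `B_k(L,t₀)` is the pullback of `B_k(L',t₀)` by `M(t₀)`; in particular
the partial signatures coincide. -/
theorem partial_signatures_invariant_under_cogredience
    {E : Type*} [NormedAddCommGroup E] [InnerProductSpace ℝ E] [FiniteDimensional ℝ E]
    (L L' M : ℝ → E →L[ℝ] E) (a b t₀ : ℝ) (hab : t₀ ∈ Set.Ioo a b)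
    (hL : ContDiff ℝ (⊤ : ℕ∞) L) (hL' : ContDiff ℝ (⊤ : ℕ∞) L') (hM : ContDiff ℝ (⊤ : ℕ∞) M)
    (hMinv : ∀ t, Function.Bijective ⇑(M t))
    (hsym : ∀ t, ∀ x y : E, ⟪L t x, y⟫ = ⟪x, L t y⟫)
    (hsym' : ∀ t, ∀ x y : E, ⟪L' t x, y⟫ = ⟪x, L' t y⟫)
    (hrel : ∀ t, ∀ x y : E, ⟪L t x, y⟫ = ⟪L' t (M t x), M t y⟫)
    (hisol : ∃ δ > 0, ∀ t, t ≠ t₀ → |t - t₀| < δ →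
      Function.Injective ⇑(L t) ∧ Function.Injective ⇑(L' t))
    (Bk Bk' : ℕ → E → E → ℝ)
    (hBk : ∀ k, 1 ≤ k → ∀ u : ℝ → E, IsRootFn L t₀ k u → ∀ w ∈ Wk L t₀ k,
      Bk k (u t₀) w
        = (Nat.factorial k : ℝ)⁻¹ * ⟪iteratedDeriv k (fun t => L t (u t)) t₀, w⟫)
    (hBk' : ∀ k, 1 ≤ k → ∀ u : ℝ → E, IsRootFn L' t₀ k u → ∀ w ∈ Wk L' t₀ k,
      Bk' k (u t₀) w
        = (Nat.factorial k : ℝ)⁻¹ * ⟪iteratedDeriv k (fun t => L' t (u t)) t₀, w⟫) :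
    (∀ k : ℕ, (⇑(M t₀)) '' Wk L t₀ k = Wk L' t₀ k) ∧
    (∀ k : ℕ, 1 ≤ k → ∀ u₀ ∈ Wk L t₀ k, ∀ v₀ ∈ Wk L t₀ k,
      Bk k u₀ v₀ = Bk' k (M t₀ u₀) (M t₀ v₀)) ∧
    (∀ k : ℕ, 1 ≤ k →
      posIndexOn (Bk k) (Wk L t₀ k) = posIndexOn (Bk' k) (Wk L' t₀ k) ∧
      negIndexOn (Bk k) (Wk L t₀ k) = negIndexOn (Bk' k) (Wk L' t₀ k)) := by
  classical
  set A : ℝ → E →L[ℝ] E := fun t => ContinuousLinearMap.adjoint (M t) with hA_def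
  have hAc : ContDiff ℝ (⊤ : ℕ∞) A := (adjCLM E).contDiff.comp hM
  have hMunit : ∀ t, IsUnit (M t) := fun t =>
    ContinuousLinearMap.isUnit_iff_bijective.mpr (hMinv t)
  have key : ∀ (S T : E →L[ℝ] E), S * T = 1 →
      ContinuousLinearMap.adjoint T * ContinuousLinearMap.adjoint S = 1 := by
    intro S T h
    rw [ContinuousLinearMap.mul_def, ← ContinuousLinearMap.adjoint_comp,
      ← ContinuousLinearMap.mul_def, h, ContinuousLinearMap.one_def,
      ContinuousLinearMap.adjoint_id]
  have hAunit : ∀ t, IsUnit (A t) := by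
    intro t
    obtain ⟨u, hu⟩ := hMunit t
    refine ⟨⟨A t, ContinuousLinearMap.adjoint (↑u⁻¹ : E →L[ℝ] E), ?_, ?_⟩, rfl⟩
    · show ContinuousLinearMap.adjoint (M t) *
        ContinuousLinearMap.adjoint (↑u⁻¹ : E →L[ℝ] E) = 1
      rw [← hu]
      exact key _ _ u.inv_mul
    · show ContinuousLinearMap.adjoint (↑u⁻¹ : E →L[ℝ] E) *
        ContinuousLinearMap.adjoint (M t) = 1
      rw [← hu]
      exact key _ _ u.mul_inv
  set N : ℝ → E →L[ℝ] E := fun t => Ring.inverse (M t) with hN_def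
  set P : ℝ → E →L[ℝ] E := fun t => Ring.inverse (A t) with hP_def
  have hinvc : ∀ (B : ℝ → E →L[ℝ] E), ContDiff ℝ (⊤ : ℕ∞) B → (∀ t, IsUnit (B t)) →
      ContDiff ℝ (⊤ : ℕ∞) (fun t => Ring.inverse (B t)) := by
    intro B hB hBu
    rw [contDiff_iff_contDiffAt]
    intro t
    obtain ⟨u, hu⟩ := hBu t
    have h1 : ContDiffAt ℝ (⊤ : ℕ∞) Ring.inverse (B t) := hu ▸ contDiffAt_ringInverse ℝ u
    exact h1.comp t hB.contDiffAt
  have hNc : ContDiff ℝ (⊤ : ℕ∞) N := hinvc M hM hMunit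
  have hPc : ContDiff ℝ (⊤ : ℕ∞) P := hinvc A hAc hAunit
  have hMN : ∀ t (x : E), M t (N t x) = x := by
    intro t x
    have h1 : M t * N t = 1 := Ring.mul_inverse_cancel (M t) (hMunit t)
    calc M t (N t x) = (M t * N t) x := (ContinuousLinearMap.mul_apply _ _ _).symm
      _ = x := by rw [h1]; simp
  have hPA : ∀ t (x : E), P t (A t x) = x := by
    intro t x
    have h1 : P t * A t = 1 := Ring.inverse_mul_cancel (A t) (hAunit t)
    calc P t (A t x) = (P t * A t) x := (ContinuousLinearMap.mul_apply _ _ _).symm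
      _ = x := by rw [h1]; simp
  have hLA : ∀ t (x : E), L t x = A t (L' t (M t x)) := by
    intro t x
    refine ext_inner_right ℝ fun y => ?_
    rw [hrel t x y]
    exact (ContinuousLinearMap.adjoint_inner_left (M t) y (L' t (M t x))).symm
  have hL'A : ∀ t (x : E), L' t (M t x) = P t (L t x) := by
    intro t x
    rw [hLA t x]
    exact (hPA t _).symm
  -- forward root function transfer
  have hfwd : ∀ k (u : ℝ → E), IsRootFn L t₀ k u → IsRootFn L' t₀ k (fun t => M t (u t)) := by
    intro k u hu
    obtain ⟨husm, hu0, huk⟩ := hu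
    have heq : (fun t => L' t (M t (u t))) = fun t => P t (L t (u t)) :=
      funext fun t => hL'A t (u t)
    refine ⟨hM.clm_apply husm, ?_, ?_⟩
    · show L' t₀ (M t₀ (u t₀)) = 0
      rw [hL'A t₀ (u t₀), hu0, map_zero]
    · intro j hj
      show iteratedDeriv j (fun t => L' t (M t (u t))) t₀ = 0
      rw [heq]
      exact (leibniz_aux t₀ k P (fun t => L t (u t)) (hPc.of_le (by simp))
        ((hL.clm_apply husm).of_le (by simp)) huk).1 j hj
  -- backward root function transfer
  have hbwd : ∀ k (v : ℝ → E), IsRootFn L' t₀ k v → IsRootFn L t₀ k (fun t => N t (v t)) := by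
    intro k v hv
    obtain ⟨hvsm, hv0, hvk⟩ := hv
    have heq : (fun t => L t (N t (v t))) = fun t => A t (L' t (v t)) :=
      funext fun t => by rw [hLA t (N t (v t)), hMN t (v t)]
    refine ⟨hNc.clm_apply hvsm, ?_, ?_⟩
    · show L t₀ (N t₀ (v t₀)) = 0
      rw [hLA t₀ (N t₀ (v t₀)), hMN t₀ (v t₀), hv0, map_zero]
    · intro j hj
      show iteratedDeriv j (fun t => L t (N t (v t))) t₀ = 0
      rw [heq]
      exact (leibniz_aux t₀ k A (fun t => L' t (v t)) (hAc.of_le (by simp))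
        ((hL'.clm_apply hvsm).of_le (by simp)) hvk).1 j hj
  -- derivative transfer
  have hder : ∀ k (u : ℝ → E), IsRootFn L t₀ k u →
      iteratedDeriv k (fun t => L t (u t)) t₀ =
        A t₀ (iteratedDeriv k (fun t => L' t (M t (u t))) t₀) := by
    intro k u hu
    have hv := hfwd k u hu
    obtain ⟨husm, hu0, huk⟩ := hu
    have heq : (fun t => L t (u t)) = fun t => A t (L' t (M t (u t))) :=
      funext fun t => hLA t (u t)
    rw [heq]
    exact (leibniz_aux t₀ k A (fun t => L' t (M t (u t))) (hAc.of_le (by simp))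
      ((hL'.clm_apply (hM.clm_apply husm)).of_le (by simp))
      (fun j hj => hv.2.2 j hj)).2
  -- conclusion 1
  have hW : ∀ k : ℕ, (⇑(M t₀)) '' Wk L t₀ k = Wk L' t₀ k := by
    intro k
    ext v₀
    constructor
    · rintro ⟨u₀, ⟨u, hu, rfl⟩, rfl⟩
      exact ⟨fun t => M t (u t), hfwd k u hu, rfl⟩
    · rintro ⟨v, hv, rfl⟩
      exact ⟨N t₀ (v t₀), ⟨fun t => N t (v t), hbwd k v hv, rfl⟩, hMN t₀ (v t₀)⟩
  -- conclusion 2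
  have hB : ∀ k : ℕ, 1 ≤ k → ∀ u₀ ∈ Wk L t₀ k, ∀ v₀ ∈ Wk L t₀ k,
      Bk k u₀ v₀ = Bk' k (M t₀ u₀) (M t₀ v₀) := by
    intro k hk u₀ hu₀ v₀ hv₀
    obtain ⟨u, hu, rfl⟩ := hu₀
    have hv' : IsRootFn L' t₀ k (fun t => M t (u t)) := hfwd k u hu
    have hMv₀ : M t₀ v₀ ∈ Wk L' t₀ k := by
      rw [← hW k]; exact ⟨v₀, hv₀, rfl⟩
    have e1 := hBk k hk u hu v₀ hv₀
    have e2 := hBk' k hk (fun t => M t (u t)) hv' (M t₀ v₀) hMv₀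
    rw [e1, e2, hder k u hu]
    congr 1
    exact ContinuousLinearMap.adjoint_inner_left (M t₀) v₀ _
  refine ⟨hW, hB, ?_⟩
  -- conclusion 3
  have e : E ≃ₗ[ℝ] E := LinearEquiv.ofBijective (M t₀ : E →ₗ[ℝ] E) (hMinv t₀)
  have hQ : ∀ (k : ℕ), 1 ≤ k → ∀ (Q : ℝ → Prop),
      {n : ℕ | ∃ S : Submodule ℝ E, (S : Set E) ⊆ Wk L t₀ k ∧ Module.finrank ℝ S = n ∧
        ∀ x ∈ S, x ≠ 0 → Q (Bk k x x)} =
      {n : ℕ | ∃ S : Submodule ℝ E, (S : Set E) ⊆ Wk L' t₀ k ∧ Module.finrank ℝ S = n ∧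
        ∀ x ∈ S, x ≠ 0 → Q (Bk' k x x)} := by
    intro k hk Q
    set e : E ≃ₗ[ℝ] E := LinearEquiv.ofBijective (M t₀ : E →ₗ[ℝ] E) (hMinv t₀) with he_def
    have he : ∀ x : E, e x = M t₀ x := fun x => rfl
    ext n
    simp only [Set.mem_setOf_eq]
    constructor
    · rintro ⟨S, hS, hrank, hQS⟩
      refine ⟨S.map (e : E →ₗ[ℝ] E), ?_, ?_, ?_⟩
      · rintro x hx
        rw [SetLike.mem_coe, Submodule.mem_map] at hx
        obtain ⟨y, hy, rfl⟩ := hx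
        rw [← hW k]
        exact ⟨y, hS hy, (he y).symm⟩
      · exact (LinearEquiv.finrank_map_eq e S).trans hrank
      · intro x hx hx0
        rw [Submodule.mem_map] at hx
        obtain ⟨y, hy, rfl⟩ := hx
        have hy0 : y ≠ 0 := by
          rintro rfl
          exact hx0 (map_zero _)
        have hby : Bk k y y = Bk' k (M t₀ y) (M t₀ y) := hB k hk y (hS hy) y (hS hy)
        show Q (Bk' k (M t₀ y) (M t₀ y))
        rw [← hby]
        exact hQS y hy hy0
    · rintro ⟨S, hS, hrank, hQS⟩
      have hsub : ∀ y ∈ S, e.symm y ∈ Wk L t₀ k ∧ M t₀ (e.symm y) = y := by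
        intro y hy
        obtain ⟨w, hw, hwy⟩ : y ∈ (⇑(M t₀)) '' Wk L t₀ k := by rw [hW k]; exact hS hy
        have hew : e w = y := hwy
        have h1 : e.symm y = w := by rw [← hew, LinearEquiv.symm_apply_apply]
        rw [h1]
        exact ⟨hw, hwy⟩
      refine ⟨S.map (e.symm : E →ₗ[ℝ] E), ?_, ?_, ?_⟩
      · rintro x hx
        rw [SetLike.mem_coe, Submodule.mem_map] at hx
        obtain ⟨y, hy, rfl⟩ := hx
        exact (hsub y hy).1
      · exact (LinearEquiv.finrank_map_eq e.symm S).trans hrank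
      · intro x hx hx0
        rw [Submodule.mem_map] at hx
        obtain ⟨y, hy, rfl⟩ := hx
        have hy0 : y ≠ 0 := by
          rintro rfl
          exact hx0 (map_zero _)
        have hmem := (hsub y hy).1
        have hMy : M t₀ (e.symm y) = y := (hsub y hy).2
        have hby : Bk k (e.symm y) (e.symm y) = Bk' k y y := by
          rw [hB k hk (e.symm y) hmem (e.symm y) hmem, hMy]
        show Q (Bk k (e.symm y) (e.symm y))
        rw [hby]
        exact hQS y hy hy0
  intro k hk
  exact ⟨congrArg sSup (hQ k hk (fun r => 0 < r)), congrArg sSup (hQ k hk (fun r => r < 0))⟩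
end

section
/- Let L : [a,b] → Sym(V) be a smooth curve of symmetric operators on a finite-dimensional real inner product space, with an isolated degeneracy instant at t₀ ∈ (a,b). Let h : [a,b] → GL(V) be a smooth curve of isomorphisms such that h(t)* L(t) = L(t) h(t) for all t and h(t₀) restricts to the identity on Ker(L(t₀)). Then L̃(t) := L(t) h(t) is a curve of symmetric operators, t₀ is an isolated degeneracy instant of L̃, and L and L̃ have the same spaces W_k and same bilinear forms B_k at t₀ (hence the same partial signatures). -/
open scoped RealInnerProductSpace

section Aux
variable {E : Type*} [NormedAddCommGroup E] [InnerProductSpace ℝ E]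

lemma myIteratedDeriv_add {F : Type*} [NormedAddCommGroup F] [NormedSpace ℝ F]
    {f g : ℝ → F} (hf : ContDiff ℝ (⊤ : ℕ∞) f) (hg : ContDiff ℝ (⊤ : ℕ∞) g) (n : ℕ) (x : ℝ) :
    iteratedDeriv n (fun t => f t + g t) x = iteratedDeriv n f x + iteratedDeriv n g x := by
  simp only [iteratedDeriv_eq_iteratedFDeriv]
  rw [show (fun t => f t + g t) = f + g from rfl,
    iteratedFDeriv_add_apply (hf.of_le (by exact_mod_cast le_top)).contDiffAt (hg.of_le (by exact_mod_cast le_top)).contDiffAt]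
  simp

lemma myIteratedDeriv_neg {F : Type*} [NormedAddCommGroup F] [NormedSpace ℝ F]
    {g : ℝ → F} (n : ℕ) (x : ℝ) :
    iteratedDeriv n (fun t => -(g t)) x = -iteratedDeriv n g x := by
  simp only [iteratedDeriv_eq_iteratedFDeriv]
  rw [show (fun t => -(g t)) = -g from rfl, iteratedFDeriv_neg_apply]
  simp

lemma myIteratedDeriv_sub {F : Type*} [NormedAddCommGroup F] [NormedSpace ℝ F]
    {f g : ℝ → F} (hf : ContDiff ℝ (⊤ : ℕ∞) f) (hg : ContDiff ℝ (⊤ : ℕ∞) g) (n : ℕ) (x : ℝ) :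
    iteratedDeriv n (fun t => f t - g t) x = iteratedDeriv n f x - iteratedDeriv n g x := by
  have : (fun t => f t - g t) = fun t => f t + -(g t) := by funext t; rw [sub_eq_add_neg]
  rw [this, myIteratedDeriv_add hf hg.neg n x, myIteratedDeriv_neg, sub_eq_add_neg]

lemma myContDiff_deriv {F : Type*} [NormedAddCommGroup F] [NormedSpace ℝ F] {f : ℝ → F}
    (hf : ContDiff ℝ (⊤ : ℕ∞) f) : ContDiff ℝ (⊤ : ℕ∞) (deriv f) := by
  have h1 : ContDiff ℝ (((⊤ : ℕ∞) : WithTop ℕ∞) + 1) f := by exact hf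
  exact (contDiff_succ_iff_deriv.mp h1).2.2

lemma myDeriv_inner {f g : ℝ → E} (hf : ContDiff ℝ (⊤ : ℕ∞) f) (hg : ContDiff ℝ (⊤ : ℕ∞) g) :
    deriv (fun t => ⟪f t, g t⟫) = fun t => ⟪f t, deriv g t⟫ + ⟪deriv f t, g t⟫ := by
  funext t
  exact (((hf.differentiable (by simp) t).hasDerivAt).inner ℝ
    ((hg.differentiable (by simp) t).hasDerivAt)).deriv

lemma vanishD (t₀ : ℝ) : ∀ (k : ℕ) (f g : ℝ → E), ContDiff ℝ (⊤ : ℕ∞) f → ContDiff ℝ (⊤ : ℕ∞) g →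
    (∀ j ≤ k, iteratedDeriv j f t₀ = 0) →
    iteratedDeriv k (fun t => ⟪f t, g t⟫) t₀ = 0 := by
  intro k
  induction k with
  | zero =>
    intro f g hf hg h0
    have : f t₀ = 0 := by simpa using h0 0 le_rfl
    simp [iteratedDeriv_zero, this]
  | succ k ih =>
    intro f g hf hg h0
    have hf' : ContDiff ℝ (⊤ : ℕ∞) (deriv f) := myContDiff_deriv hf
    have hg' : ContDiff ℝ (⊤ : ℕ∞) (deriv g) := myContDiff_deriv hg
    rw [iteratedDeriv_succ', myDeriv_inner hf hg]
    rw [myIteratedDeriv_add (hf.inner ℝ hg') (hf'.inner ℝ hg) k t₀]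
    have h1 : iteratedDeriv k (fun t => ⟪f t, deriv g t⟫) t₀ = 0 :=
      ih f (deriv g) hf hg' (fun j hj => h0 j (hj.trans (Nat.le_succ k)))
    have h2 : iteratedDeriv k (fun t => ⟪deriv f t, g t⟫) t₀ = 0 := by
      refine ih (deriv f) g hf' hg (fun j hj => ?_)
      have := h0 (j + 1) (Nat.succ_le_succ hj)
      rwa [iteratedDeriv_succ'] at this
    rw [h1, h2, add_zero]

lemma leadTerm (t₀ : ℝ) : ∀ (k : ℕ) (f g : ℝ → E), ContDiff ℝ (⊤ : ℕ∞) f → ContDiff ℝ (⊤ : ℕ∞) g →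
    (∀ j < k, iteratedDeriv j f t₀ = 0) →
    iteratedDeriv k (fun t => ⟪f t, g t⟫) t₀ = ⟪iteratedDeriv k f t₀, g t₀⟫ := by
  intro k
  induction k with
  | zero => intro f g hf hg h0; simp [iteratedDeriv_zero]
  | succ k ih =>
    intro f g hf hg h0
    have hf' : ContDiff ℝ (⊤ : ℕ∞) (deriv f) := myContDiff_deriv hf
    have hg' : ContDiff ℝ (⊤ : ℕ∞) (deriv g) := myContDiff_deriv hg
    rw [iteratedDeriv_succ', myDeriv_inner hf hg]
    rw [myIteratedDeriv_add (hf.inner ℝ hg') (hf'.inner ℝ hg) k t₀]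
    have h1 : iteratedDeriv k (fun t => ⟪f t, deriv g t⟫) t₀ = 0 :=
      vanishD t₀ k f (deriv g) hf hg' (fun j hj => h0 j (Nat.lt_succ_of_le hj))
    have h2 : iteratedDeriv k (fun t => ⟪deriv f t, g t⟫) t₀
        = ⟪iteratedDeriv k (deriv f) t₀, g t₀⟫ := by
      refine ih (deriv f) g hf' hg (fun j hj => ?_)
      have := h0 (j + 1) (Nat.succ_lt_succ hj)
      rwa [iteratedDeriv_succ'] at this
    rw [h1, h2, zero_add, ← iteratedDeriv_succ']

/-- Well-definedness of the `k`-th form: two root functions of order `k` with the same value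
at `t₀` give the same pairing of the `k`-th derivative against values of root functions. -/
lemma Bk_welldef (L : ℝ → E →L[ℝ] E) (t₀ : ℝ) (hL : ContDiff ℝ (⊤ : ℕ∞) L)
    (hsym : ∀ t, ∀ x y : E, ⟪L t x, y⟫ = ⟪x, L t y⟫) (k : ℕ) (u w v : ℝ → E)
    (hu : IsRootFn L t₀ k u) (hw : IsRootFn L t₀ k w) (huw : u t₀ = w t₀)
    (hv : IsRootFn L t₀ k v) :
    ⟪iteratedDeriv k (fun t => L t (u t)) t₀, v t₀⟫
      = ⟪iteratedDeriv k (fun t => L t (w t)) t₀, v t₀⟫ := by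
  have hLu : ContDiff ℝ (⊤ : ℕ∞) (fun t => L t (u t)) := hL.clm_apply hu.1
  have hLw : ContDiff ℝ (⊤ : ℕ∞) (fun t => L t (w t)) := hL.clm_apply hw.1
  have hLv : ContDiff ℝ (⊤ : ℕ∞) (fun t => L t (v t)) := hL.clm_apply hv.1
  set f : ℝ → E := fun t => L t (u t) - L t (w t) with hf_def
  have hfcd : ContDiff ℝ (⊤ : ℕ∞) f := hLu.sub hLw
  have hfj : ∀ j < k, iteratedDeriv j f t₀ = 0 := by
    intro j hj
    rw [hf_def, myIteratedDeriv_sub hLu hLw, hu.2.2 j hj, hw.2.2 j hj, sub_zero]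
  have hg : ContDiff ℝ (⊤ : ℕ∞) (fun t => u t - w t) := hu.1.sub hw.1
  -- the inner product ⟪f t, v t⟫ equals ⟪L t (v t), u t - w t⟫ by symmetry
  have hswap : (fun t => ⟪f t, v t⟫) = fun t => ⟪L t (v t), u t - w t⟫ := by
    funext t
    rw [hf_def]
    simp only [← map_sub]
    rw [hsym t (u t - w t) (v t), real_inner_comm]
  have h1 : iteratedDeriv k (fun t => ⟪f t, v t⟫) t₀ = ⟪iteratedDeriv k f t₀, v t₀⟫ :=
    leadTerm t₀ k f v hfcd hv.1 hfj
  have h2 : iteratedDeriv k (fun t => ⟪f t, v t⟫) t₀ = 0 := by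
    rw [hswap, leadTerm t₀ k (fun t => L t (v t)) (fun t => u t - w t) hLv hg hv.2.2]
    rw [show u t₀ - w t₀ = 0 by rw [huw, sub_self], inner_zero_right]
  have h3 : ⟪iteratedDeriv k f t₀, v t₀⟫ = (0 : ℝ) := by rw [← h1, h2]
  rw [hf_def, myIteratedDeriv_sub hLu hLw] at h3
  rw [inner_sub_left] at h3
  linarith

end Aux

/-- main -/
theorem partial_signatures_invariant_under_right_composition
    {E : Type*} [NormedAddCommGroup E] [InnerProductSpace ℝ E] [FiniteDimensional ℝ E]
    (L h : ℝ → E →L[ℝ] E) (t₀ : ℝ)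
    (hL : ContDiff ℝ (⊤ : ℕ∞) L) (hh : ContDiff ℝ (⊤ : ℕ∞) h)
    (hsym : ∀ t, ∀ x y : E, ⟪L t x, y⟫ = ⟪x, L t y⟫)
    (hinv : ∀ t, Function.Bijective ⇑(h t))
    (hcomm : ∀ t, ∀ x y : E, ⟪L t x, h t y⟫ = ⟪L t (h t x), y⟫)
    (hid : ∀ x ∈ LinearMap.ker (L t₀ : E →ₗ[ℝ] E), h t₀ x = x)
    (hdeg : ¬ Function.Injective ⇑(L t₀))
    (hisol : ∃ δ > 0, ∀ t, t ≠ t₀ → |t - t₀| < δ → Function.Injective ⇑(L t)) :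
    (∀ t, ∀ x y : E, ⟪(L t).comp (h t) x, y⟫ = ⟪x, (L t).comp (h t) y⟫) ∧
    (¬ Function.Injective ⇑((L t₀).comp (h t₀))) ∧
    (∃ δ > 0, ∀ t, t ≠ t₀ → |t - t₀| < δ → Function.Injective ⇑((L t).comp (h t))) ∧
    (∀ k : ℕ, Wk L t₀ k = Wk (fun t => (L t).comp (h t)) t₀ k) ∧
    (∀ k : ℕ, 1 ≤ k → ∀ u util : ℝ → E, IsRootFn L t₀ k u →
      IsRootFn (fun t => (L t).comp (h t)) t₀ k util → u t₀ = util t₀ →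
      ∀ v₀ ∈ Wk L t₀ k,
        ⟪iteratedDeriv k (fun t => L t (u t)) t₀, v₀⟫
          = ⟪iteratedDeriv k (fun t => L t (h t (util t))) t₀, v₀⟫) := by
  haveI : CompleteSpace E := FiniteDimensional.complete ℝ E
  -- units
  have hUnit : ∀ t, IsUnit (h t) := fun t =>
    ContinuousLinearMap.isUnit_iff_bijective.mpr (hinv t)
  set hi : ℝ → E →L[ℝ] E := fun t => Ring.inverse (h t) with hi_def
  have hhicd : ContDiff ℝ (⊤ : ℕ∞) hi := by
    rw [contDiff_iff_contDiffAt]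
    intro t
    have h1 : ContDiffAt ℝ (⊤ : ℕ∞) (Ring.inverse : (E →L[ℝ] E) → E →L[ℝ] E) (h t) := by
      have := contDiffAt_ringInverse (𝕜 := ℝ) (R := E →L[ℝ] E) (n := (⊤ : ℕ∞)) (hUnit t).unit
      rwa [(hUnit t).unit_spec] at this
    exact h1.comp t hh.contDiffAt
  have hcancel : ∀ t (x : E), h t (hi t x) = x := by
    intro t x
    have hmul : h t * hi t = 1 := Ring.mul_inverse_cancel _ (hUnit t)
    calc h t (hi t x) = (h t * hi t) x := rfl
      _ = x := by rw [hmul]; rfl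
  -- if h t₀ maps z into ker(L t₀), then h t₀ z = z
  have hfix : ∀ z : E, L t₀ (h t₀ z) = 0 → h t₀ z = z := by
    intro z hz
    have hker : h t₀ z ∈ LinearMap.ker (L t₀ : E →ₗ[ℝ] E) := LinearMap.mem_ker.mpr hz
    have := hid (h t₀ z) hker
    exact (hinv t₀).1 this
  refine ⟨?_, ?_, ?_, ?_, ?_⟩
  · -- symmetry
    intro t x y
    simp only [ContinuousLinearMap.comp_apply]
    rw [← hcomm t x y, hsym t x (h t y)]
  · -- degenerate at t₀
    rw [Function.not_injective_iff] at hdeg ⊢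
    obtain ⟨a, b, hab, hne⟩ := hdeg
    have hx0 : L t₀ (a - b) = 0 := by rw [map_sub, hab, sub_self]
    refine ⟨hi t₀ (a - b), 0, ?_, ?_⟩
    · simp only [ContinuousLinearMap.comp_apply, map_zero, hcancel t₀ (a - b), hx0]
    · intro hcontra
      apply hne
      have : h t₀ (hi t₀ (a - b)) = h t₀ 0 := by rw [hcontra]
      rw [hcancel t₀ (a - b), map_zero] at this
      exact sub_eq_zero.mp this
  · -- isolated
    obtain ⟨δ, hδ, hδ'⟩ := hisol
    exact ⟨δ, hδ, fun t ht ht' => by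
      rw [ContinuousLinearMap.coe_comp']
      exact (hδ' t ht ht').comp (hinv t).1⟩
  · -- Wk equality
    intro k
    ext v₀
    constructor
    · rintro ⟨u, hu, rfl⟩
      refine ⟨fun t => hi t (u t), ⟨hhicd.clm_apply hu.1, ?_, ?_⟩, ?_⟩
      · simp only [ContinuousLinearMap.comp_apply, hcancel t₀ (u t₀)]
        exact hu.2.1
      · intro j hj
        have : (fun t => ((L t).comp (h t)) (hi t (u t))) = fun t => L t (u t) := by
          funext t
          simp only [ContinuousLinearMap.comp_apply, hcancel t (u t)]
        rw [this]
        exact hu.2.2 j hj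
      · -- value at t₀
        have h1 : h t₀ (hi t₀ (u t₀)) = u t₀ := hcancel t₀ (u t₀)
        have h2 : h t₀ (u t₀) = u t₀ := hid _ (LinearMap.mem_ker.mpr hu.2.1)
        exact (hinv t₀).1 (h1.trans h2.symm)
    · rintro ⟨w, hw, rfl⟩
      have hval : h t₀ (w t₀) = w t₀ :=
        hfix (w t₀) (by simpa only [ContinuousLinearMap.comp_apply] using hw.2.1)
      refine ⟨fun t => h t (w t), ⟨hh.clm_apply hw.1, ?_, ?_⟩, hval⟩
      · show L t₀ (h t₀ (w t₀)) = 0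
        simpa only [ContinuousLinearMap.comp_apply] using hw.2.1
      · intro j hj
        have := hw.2.2 j hj
        simpa only [ContinuousLinearMap.comp_apply] using this
  · -- Bk equality
    intro k _hk u util hu hutil huu v₀ hv₀
    obtain ⟨v, hv, rfl⟩ := hv₀
    set w : ℝ → E := fun t => h t (util t) with hw_def
    have hval : h t₀ (util t₀) = util t₀ :=
      hfix (util t₀) (by simpa only [ContinuousLinearMap.comp_apply] using hutil.2.1)
    have hwroot : IsRootFn L t₀ k w := by
      refine ⟨hh.clm_apply hutil.1, ?_, ?_⟩
      · show L t₀ (h t₀ (util t₀)) = 0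
        simpa only [ContinuousLinearMap.comp_apply] using hutil.2.1
      · intro j hj
        have := hutil.2.2 j hj
        simpa only [ContinuousLinearMap.comp_apply] using this
    have huw : u t₀ = w t₀ := by rw [huu]; exact hval.symm
    exact Bk_welldef L t₀ hL hsym k u w v hu hwroot huw hv
end

section
/- Let X be a topological space, G a group, and X = ⋃_{i∈I} U_i an open cover. Suppose for each i a map φ_i from the fundamental groupoid π(U_i) to G is given which is multiplicative under concatenation, invariant under fixed-endpoint homotopy, and such that φ_i([γ]) = φ_j([γ]) whenever γ is a path in U_i ∩ U_j. Then there exists a unique map φ : π(X) → G, multiplicative under concatenation and invariant under fixed-endpoint homotopies, such that φ([γ]) = φ_i([γ]) for every path γ with image in U_i. -/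
/-!
The `φ i` glue to a single function `ψ` on paths that lie in some `U i`. Given a path `γ`, a
Lebesgue number of the cover `γ⁻¹ (U i)` of `[0, 1]` makes every piece of a fine uniform
subdivision lie in some `U i`, and `Φ γ` is the ordered product of `ψ` over the pieces.

The engine is a cocycle identity: on a convex region of `ℝ` or `ℝ²` mapped into a single `U i`,
the image of the straight segment from `p` to `r` is homotopic inside `U i` to the broken line
through any third point `q`, so `L p r = L p q * L q r` for `L p q` the value of `ψ` on the image
of `[p, q]`. Two chains of points joined by small squares therefore have conjugate products.
Applied to the subdivisions into `n` and `n + 1` parts this shows that the product stabilises;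
applied to two nearby rows of a homotopy it shows that `Φ` is locally constant along the
homotopy, hence constant since `[0, 1]` is connected. Any other extension `Ψ` is a homotopy
invariant homomorphism, so its segment values form a global cocycle and `Ψ γ` is the same
product.
-/

def HomotopicIn {X : Type*} [TopologicalSpace X] (S : Set X) {x y : X}
    (γ γ' : Path x y) : Prop :=
  ∃ H : Path.Homotopy γ γ', ∀ p : unitInterval × unitInterval, H p ∈ S

open Set Filter Metric Topology

section Segments

open unitInterval

variable {X : Type*} [TopologicalSpace X]
  {E : Type*} [AddCommGroup E] [Module ℝ E] [TopologicalSpace E] [IsTopologicalAddGroup E]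
  [ContinuousSMul ℝ E]

def Path.Homotopy.affine {a b : E} (γ γ' : Path a b) : γ.Homotopy γ' where
  toHomotopy := ContinuousMap.Homotopy.affine γ.toContinuousMap γ'.toContinuousMap
  prop' t x hx := by rcases hx with rfl | rfl <;> simp

theorem HomotopicIn.mono {S T : Set X} {x y : X} {γ γ' : Path x y} (h : HomotopicIn S γ γ')
    (hST : S ⊆ T) : HomotopicIn T γ γ' :=
  let ⟨H, hH⟩ := h
  ⟨H, fun p => hST (hH p)⟩

theorem homotopicIn_map_of_convex (F : C(E, X)) {S : Set E} (hS : Convex ℝ S) {a b : E}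
    {γ γ' : Path a b} (hγ : range γ ⊆ S) (hγ' : range γ' ⊆ S) :
    HomotopicIn (F '' S) (γ.map F.continuous) (γ'.map F.continuous) := by
  refine ⟨(Path.Homotopy.affine γ γ').map F, fun p => mem_image_of_mem F ?_⟩
  refine hS.segment_subset (hγ (mem_range_self p.2)) (hγ' (mem_range_self p.2)) ?_
  rw [← Path.range_segment]
  exact mem_range_self p.1

theorem range_map_segment_subset (F : C(E, X)) {S : Set E} (hS : Convex ℝ S) {p q : E}
    (hp : p ∈ S) (hq : q ∈ S) : range ((Path.segment p q).map F.continuous) ⊆ F '' S := by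
  rw [Path.map_coe, range_comp, Path.range_segment]
  exact image_mono (hS.segment_subset hp hq)

theorem apply_eq_of_forall_apply_eq {G : Sort*} (f : (x y : X) → Path x y → G)
    {x y x' y' : X} {γ : Path x y} {γ' : Path x' y'} (h : ∀ t, γ t = γ' t) :
    f x y γ = f x' y' γ' := by
  obtain rfl : x = x' := by simpa using h 0
  obtain rfl : y = y' := by simpa using h 1
  obtain rfl : γ = γ' := Path.ext (funext h)
  rfl

variable {G : Type*} (ψ : (x y : X) → Path x y → G)

def segmentValue (F : C(E, X)) (p q : E) : G :=
  ψ (F p) (F q) ((Path.segment p q).map F.continuous)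

theorem segmentValue_trans_left {x y z : X} (γ : Path x y) (μ : Path y z) {a b : ℝ}
    (ha : a ≤ 1 / 2) (hb : b ≤ 1 / 2) :
    segmentValue ψ (γ.trans μ).extend a b = segmentValue ψ γ.extend (2 * a) (2 * b) :=
  apply_eq_of_forall_apply_eq ψ fun t => by
    simp only [Path.map_coe, Function.comp_apply, Path.segment_apply]
    rw [Path.extend_trans_of_le_half _ _ ((convex_Iic (1 / 2 : ℝ)).lineMap_mem ha hb t.2)]
    simp only [AffineMap.lineMap_apply_module, smul_eq_mul]
    ring_nf

theorem segmentValue_trans_right {x y z : X} (γ : Path x y) (μ : Path y z) {a b : ℝ}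
    (ha : 1 / 2 ≤ a) (hb : 1 / 2 ≤ b) :
    segmentValue ψ (γ.trans μ).extend a b = segmentValue ψ μ.extend (2 * a - 1) (2 * b - 1) :=
  apply_eq_of_forall_apply_eq ψ fun t => by
    simp only [Path.map_coe, Function.comp_apply, Path.segment_apply]
    rw [Path.extend_trans_of_half_le _ _ ((convex_Ici (1 / 2 : ℝ)).lineMap_mem ha hb t.2)]
    simp only [AffineMap.lineMap_apply_module, smul_eq_mul]
    ring_nf

namespace Path.Homotopy

variable {x y : X} {γ γ' : Path x y} (H : γ.Homotopy γ')

noncomputable def extendToPlane : C(ℝ × ℝ, X) :=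
  H.toContinuousMap.comp
    ⟨fun p => (projIcc 0 1 zero_le_one p.1, projIcc 0 1 zero_le_one p.2), by fun_prop⟩

theorem extendToPlane_apply (s : I) (t : ℝ) : H.extendToPlane (s, t) = (H.eval s).extend t := by
  simp [extendToPlane, Path.extend, IccExtend]

theorem extendToPlane_of_snd_eq_zero {p : ℝ × ℝ} (hp : p.2 = 0) : H.extendToPlane p = x := by
  simp [extendToPlane, hp]

theorem extendToPlane_of_snd_eq_one {p : ℝ × ℝ} (hp : p.2 = 1) : H.extendToPlane p = y := by
  simp [extendToPlane, hp]

theorem segmentValue_extendToPlane_row (s : I) (a b : ℝ) :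
    segmentValue ψ (H.eval s).extend a b = segmentValue ψ H.extendToPlane (s, a) (s, b) := by
  refine apply_eq_of_forall_apply_eq ψ fun t => ?_
  have hrow : AffineMap.lineMap ((s : ℝ), a) ((s : ℝ), b) (t : ℝ) =
      ((s : ℝ), AffineMap.lineMap a b (t : ℝ)) :=
    Prod.ext (by rw [AffineMap.fst_lineMap, AffineMap.lineMap_same_apply])
      (AffineMap.snd_lineMap _ _ _)
  simp only [Path.map_coe, Function.comp_apply, Path.segment_apply, hrow, extendToPlane_apply]

end Path.Homotopy

end Segments

section Cocycle

variable {α G : Type*} [Group G]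

def IsCocycleOn (L : α → α → G) (S : Set α) : Prop :=
  ∀ p ∈ S, ∀ q ∈ S, ∀ r ∈ S, L p r = L p q * L q r

def chainProd (L : α → α → G) (P : ℕ → α) (n : ℕ) : G :=
  ((List.range n).map fun k => L (P k) (P (k + 1))).prod

variable {L : α → α → G} {S : Set α}

theorem IsCocycleOn.apply_self (hL : IsCocycleOn L S) {p : α} (hp : p ∈ S) : L p p = 1 :=
  left_eq_mul.1 (hL p hp p hp p hp)

theorem IsCocycleOn.apply_swap (hL : IsCocycleOn L S) {p q : α} (hp : p ∈ S) (hq : q ∈ S) :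
    L q p = (L p q)⁻¹ :=
  eq_inv_of_mul_eq_one_right (by rw [← hL p hp q hq p hp, hL.apply_self hp])

theorem chainProd_zero (P : ℕ → α) : chainProd L P 0 = 1 := rfl

theorem chainProd_succ (P : ℕ → α) (n : ℕ) :
    chainProd L P (n + 1) = chainProd L P n * L (P n) (P (n + 1)) :=
  List.prod_range_succ _ n

theorem chainProd_add (P : ℕ → α) (m n : ℕ) :
    chainProd L P (m + n) = chainProd L P m * chainProd L (fun k => P (m + k)) n := by
  simp [chainProd, List.range_add, Function.comp_def, Nat.add_assoc]

theorem chainProd_congr {β : Type*} {L' : β → β → G} {P : ℕ → α} {P' : ℕ → β} {n : ℕ}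
    (h : ∀ k < n, L (P k) (P (k + 1)) = L' (P' k) (P' (k + 1))) :
    chainProd L P n = chainProd L' P' n :=
  congrArg List.prod (List.map_congr_left fun k hk => h k (List.mem_range.1 hk))

theorem IsCocycleOn.chainProd_eq (hL : IsCocycleOn L S) {P : ℕ → α} (hP : ∀ k, P k ∈ S)
    (n : ℕ) : chainProd L P n = L (P 0) (P n) := by
  induction n with
  | zero => rw [chainProd_zero, hL.apply_self (hP 0)]
  | succ n ih => rw [chainProd_succ, ih, ← hL _ (hP 0) _ (hP n) _ (hP (n + 1))]

/-- Each square turns `L (P k) (P (k + 1))` into `L (Q k) (Q (k + 1))` conjugated by the values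
on its two vertical sides, and the vertical sides of neighbouring squares cancel. -/
theorem chainProd_eq_of_squares {P Q : ℕ → α} {n : ℕ}
    (hsq : ∀ k < n, ∃ S, IsCocycleOn L S ∧ P k ∈ S ∧ P (k + 1) ∈ S ∧ Q k ∈ S ∧ Q (k + 1) ∈ S) :
    chainProd L P n = L (P 0) (Q 0) * chainProd L Q n * (L (P n) (Q n))⁻¹ := by
  induction n with
  | zero => simp [chainProd_zero]
  | succ n ih =>
    obtain ⟨S, hL, hP, hP', hQ, hQ'⟩ := hsq n n.lt_succ_self
    have hsquare : L (P n) (P (n + 1)) =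
        L (P n) (Q n) * L (Q n) (Q (n + 1)) * (L (P (n + 1)) (Q (n + 1)))⁻¹ := by
      rw [hL _ hP _ hQ _ hP', hL _ hQ _ hQ' _ hP', hL.apply_swap hP' hQ', mul_assoc]
    rw [chainProd_succ, chainProd_succ, ih fun k hk => hsq k (hk.trans n.lt_succ_self), hsquare]
    group

end Cocycle

theorem subdivision_points_mem_Icc {n k : ℕ} (hn : 1 ≤ n) (hk : k ≤ n) :
    ∀ v ∈ ({(k : ℝ) / n, ((k + 1 : ℕ) : ℝ) / n, (k : ℝ) / (n + 1 : ℕ),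
        ((k + 1 : ℕ) : ℝ) / (n + 1 : ℕ)} : Set ℝ),
      v ∈ Icc ((k : ℝ) / (n + 1 : ℕ)) ((k : ℝ) / (n + 1 : ℕ) + 2 / n) := by
  have hn' : (1 : ℝ) ≤ n := by exact_mod_cast hn
  have hk' : (k : ℝ) ≤ n := by exact_mod_cast hk
  have hk0 : (0 : ℝ) ≤ k := k.cast_nonneg
  simp only [mem_insert_iff, mem_singleton_iff, mem_Icc]
  push_cast
  rintro v (rfl | rfl | rfl | rfl) <;> constructor <;>
    (try rw [div_add_div _ _ (by positivity) (by positivity)]) <;>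
    rw [div_le_div_iff₀ (by positivity) (by positivity)] <;> nlinarith

theorem natCast_div_mem_Icc {k n : ℕ} (h : k ≤ n) : (k : ℝ) / n ∈ Icc (0 : ℝ) 1 :=
  unitInterval.div_mem k.cast_nonneg n.cast_nonneg (by exact_mod_cast h)

theorem dist_natCast_div_succ (k n : ℕ) :
    dist ((k : ℝ) / n) (((k + 1 : ℕ) : ℝ) / n) = 1 / n := by
  rw [Real.dist_eq, Nat.cast_succ, add_div, sub_add_cancel_left, abs_neg,
    abs_of_nonneg (by positivity)]

section HomOnCover

open unitInterval

variable {X : Type*} [TopologicalSpace X] {G : Type*} [Group G] {ι : Type*} {U : ι → Set X}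

structure IsHomOnCover (U : ι → Set X) (ψ : (x y : X) → Path x y → G) : Prop where
  eq_of_homotopicIn : ∀ i (x y : X) (γ γ' : Path x y), range γ ⊆ U i → range γ' ⊆ U i →
    HomotopicIn (U i) γ γ' → ψ x y γ = ψ x y γ'
  map_trans : ∀ i (x y z : X) (γ : Path x y) (μ : Path y z), range γ ⊆ U i → range μ ⊆ U i →
    ψ x z (γ.trans μ) = ψ x y γ * ψ y z μ

theorem IsHomOnCover.of_global {ψ : (x y : X) → Path x y → G}
    (hhom : ∀ (x y : X) (γ γ' : Path x y), γ.Homotopic γ' → ψ x y γ = ψ x y γ')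
    (hmul : ∀ (x y z : X) (γ : Path x y) (μ : Path y z),
      ψ x z (γ.trans μ) = ψ x y γ * ψ y z μ) :
    IsHomOnCover (fun _ : Unit => (univ : Set X)) ψ where
  eq_of_homotopicIn _ x y γ γ' _ _ h := hhom x y γ γ' ⟨h.choose⟩
  map_trans _ x y z γ μ _ _ := hmul x y z γ μ

open scoped Classical in
noncomputable def gluedValue (U : ι → Set X) (φ : (i : ι) → (x y : X) → Path x y → G)
    (x y : X) (γ : Path x y) : G :=
  if h : ∃ i, range γ ⊆ U i then φ h.choose x y γ else 1

variable {φ : (i : ι) → (x y : X) → Path x y → G}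

theorem gluedValue_eq
    (hcompat : ∀ i j, ∀ (x y : X) (γ : Path x y), range γ ⊆ U i ∩ U j → φ i x y γ = φ j x y γ)
    {i : ι} {x y : X} {γ : Path x y} (hγ : range γ ⊆ U i) : gluedValue U φ x y γ = φ i x y γ := by
  have h : ∃ j, range γ ⊆ U j := ⟨i, hγ⟩
  rw [gluedValue, dif_pos h]
  exact hcompat _ _ x y γ (subset_inter h.choose_spec hγ)

theorem isHomOnCover_gluedValue
    (hhom : ∀ i, ∀ (x y : X) (γ γ' : Path x y), range γ ⊆ U i → range γ' ⊆ U i →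
      HomotopicIn (U i) γ γ' → φ i x y γ = φ i x y γ')
    (hmul : ∀ i, ∀ (x y z : X) (γ : Path x y) (μ : Path y z), range γ ⊆ U i → range μ ⊆ U i →
      φ i x z (γ.trans μ) = φ i x y γ * φ i y z μ)
    (hcompat : ∀ i j, ∀ (x y : X) (γ : Path x y), range γ ⊆ U i ∩ U j → φ i x y γ = φ j x y γ) :
    IsHomOnCover U (gluedValue U φ) where
  eq_of_homotopicIn i x y γ γ' hγ hγ' h := by
    rw [gluedValue_eq hcompat hγ, gluedValue_eq hcompat hγ', hhom i x y γ γ' hγ hγ' h]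
  map_trans i x y z γ μ hγ hμ := by
    have hγμ : range (γ.trans μ) ⊆ U i := by rw [Path.trans_range]; exact union_subset hγ hμ
    rw [gluedValue_eq hcompat hγμ, gluedValue_eq hcompat hγ, gluedValue_eq hcompat hμ,
      hmul i x y z γ μ hγ hμ]

theorem exists_image_ball_subset {E : Type*} [PseudoMetricSpace E]
    (hopen : ∀ i, IsOpen (U i)) (hcover : ∀ x : X, ∃ i, x ∈ U i) (F : C(E, X)) {K : Set E}
    (hK : IsCompact K) : ∃ δ > 0, ∀ p ∈ K, ∃ i, F '' ball p δ ⊆ U i := by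
  have hcov : K ⊆ ⋃ i, F ⁻¹' U i := fun p _ => mem_iUnion.2 (hcover (F p))
  simpa only [image_subset_iff] using
    lebesgue_number_lemma_of_metric hK (fun i => (hopen i).preimage F.continuous) hcov

variable {ψ : (x y : X) → Path x y → G}

theorem IsHomOnCover.apply_eq_one (hψ : IsHomOnCover U ψ) {i : ι} {x y : X} (hx : x ∈ U i)
    {γ : Path x y} (hγ : ∀ t, γ t = x) : ψ x y γ = 1 := by
  obtain rfl : x = y := by simpa using (hγ 1).symm
  obtain rfl : γ = Path.refl x := Path.ext (funext hγ)
  have hrefl : range (Path.refl x) ⊆ U i := by rwa [Path.refl_range, singleton_subset_iff]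
  have h := hψ.map_trans i x x x _ _ hrefl hrefl
  rwa [Path.refl_trans_refl, left_eq_mul] at h

section Segments

variable {E : Type*} [AddCommGroup E] [Module ℝ E] [TopologicalSpace E] [IsTopologicalAddGroup E]
  [ContinuousSMul ℝ E]

theorem IsHomOnCover.segmentValue_eq_one (hψ : IsHomOnCover U ψ)
    (hcover : ∀ x : X, ∃ i, x ∈ U i) {F : C(E, X)} {p q : E}
    (h : ∀ t : I, F (AffineMap.lineMap p q (t : ℝ)) = F p) : segmentValue ψ F p q = 1 :=
  hψ.apply_eq_one (hcover (F p)).choose_spec h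

/-- The image of `[p, r]` is homotopic inside `U i` to the broken line through `q`. -/
theorem IsHomOnCover.isCocycleOn_segmentValue (hψ : IsHomOnCover U ψ) (F : C(E, X))
    {S : Set E} (hS : Convex ℝ S) {i : ι} (hSU : F '' S ⊆ U i) :
    IsCocycleOn (segmentValue ψ F) S := by
  intro p hp q hq r hr
  have hpq := (range_map_segment_subset F hS hp hq).trans hSU
  have hqr := (range_map_segment_subset F hS hq hr).trans hSU
  have hpr := (range_map_segment_subset F hS hp hr).trans hSU
  have hdirect : range (Path.segment p r) ⊆ S := by
    rw [Path.range_segment]; exact hS.segment_subset hp hr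
  have hbroken : range ((Path.segment p q).trans (Path.segment q r)) ⊆ S := by
    rw [Path.trans_range, Path.range_segment, Path.range_segment]
    exact union_subset (hS.segment_subset hp hq) (hS.segment_subset hq hr)
  rw [segmentValue, segmentValue, segmentValue, ← hψ.map_trans i _ _ _ _ _ hpq hqr,
    ← Path.map_trans]
  refine hψ.eq_of_homotopicIn i _ _ _ _ hpr ?_
    ((homotopicIn_map_of_convex F hS hdirect hbroken).mono hSU)
  rw [Path.map_trans, Path.trans_range]
  exact union_subset hpq hqr

end Segments

variable (ψ) in
noncomputable def subdivisionProd {x y : X} (γ : Path x y) (n : ℕ) : G :=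
  chainProd (segmentValue ψ γ.extend) (fun k => (k : ℝ) / n) n

/-- The subdivision into `n` parts is padded by the piece `[1, (n + 1) / n]`, on which `γ.extend`
is constant, and then compared with the subdivision into `n + 1` parts square by square. -/
theorem IsHomOnCover.subdivisionProd_succ (hψ : IsHomOnCover U ψ)
    (hcover : ∀ x : X, ∃ i, x ∈ U i) {x y : X} (γ : Path x y) {δ : ℝ}
    (hδ : ∀ p ∈ Icc (0 : ℝ) 1, ∃ i, γ.extend '' ball p δ ⊆ U i) {n : ℕ} (hn : 1 ≤ n)
    (hnδ : 2 / n < δ) : subdivisionProd ψ γ (n + 1) = subdivisionProd ψ γ n := by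
  set L := segmentValue ψ γ.extend
  set P : ℕ → ℝ := fun k => (k : ℝ) / n
  set Q : ℕ → ℝ := fun k => (k : ℝ) / (n + 1 : ℕ)
  have hn' : (1 : ℝ) ≤ n := by exact_mod_cast hn
  have hδ0 : 0 < δ := lt_trans (by positivity) hnδ
  have hPn : P n = 1 := div_self (by positivity)
  have hPn1 : 1 ≤ P (n + 1) := by
    simp only [P]; rw [le_div_iff₀ (by positivity)]; push_cast; linarith
  have hQn1 : Q (n + 1) = 1 := div_self (by positivity)
  have hconst : ∀ {a b : ℝ}, 1 ≤ a → 1 ≤ b → L a b = 1 := fun ha hb =>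
    hψ.segmentValue_eq_one hcover fun t => by
      rw [Path.extend_of_one_le _ ((convex_Ici (1 : ℝ)).lineMap_mem ha hb t.2),
        Path.extend_of_one_le _ ha]
  have hsquares : ∀ k < n + 1, ∃ S, IsCocycleOn L S ∧ P k ∈ S ∧ P (k + 1) ∈ S ∧ Q k ∈ S ∧
      Q (k + 1) ∈ S := by
    intro k hk
    obtain ⟨i, hi⟩ := hδ _ (natCast_div_mem_Icc hk.le)
    refine ⟨ball (Q k) δ, hψ.isCocycleOn_segmentValue _ (convex_ball _ _) hi, ?_⟩
    have hsub : Icc (Q k) (Q k + 2 / n) ⊆ ball (Q k) δ := by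
      rw [Real.ball_eq_Ioo]; exact Icc_subset_Ioo (by linarith) (by linarith)
    have hmem := subdivision_points_mem_Icc hn (Nat.lt_succ_iff.1 hk)
    exact ⟨hsub (hmem _ (by simp [P])), hsub (hmem _ (by simp [P])),
      hsub (hmem _ (by simp [Q])), hsub (hmem _ (by simp [Q]))⟩
  have hstart : L (P 0) (Q 0) = 1 := by
    have : Q 0 = P 0 := by simp [P, Q]
    rw [this]
    exact hψ.segmentValue_eq_one hcover fun t => by rw [AffineMap.lineMap_same_apply]
  have h := chainProd_eq_of_squares hsquares
  rw [chainProd_succ, hPn, hconst le_rfl hPn1, mul_one, hQn1, hconst hPn1 le_rfl, inv_one,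
    mul_one, hstart, one_mul] at h
  exact h.symm

theorem IsHomOnCover.exists_eventually_subdivisionProd_eq (hψ : IsHomOnCover U ψ)
    (hopen : ∀ i, IsOpen (U i)) (hcover : ∀ x : X, ∃ i, x ∈ U i) {x y : X} (γ : Path x y) :
    ∃ g, ∀ᶠ n in atTop, subdivisionProd ψ γ n = g := by
  obtain ⟨δ, hδ, hball⟩ := exists_image_ball_subset hopen hcover γ.extend
    (isCompact_Icc (a := (0 : ℝ)) (b := 1))
  have hsucc : ∀ᶠ n in atTop, subdivisionProd ψ γ (n + 1) = subdivisionProd ψ γ n := by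
    filter_upwards [eventually_ge_atTop 1,
      (tendsto_const_div_atTop_nhds_zero_nat (2 : ℝ)).eventually (gt_mem_nhds hδ)] with n hn hnδ
    exact hψ.subdivisionProd_succ hcover γ hball hn hnδ
  exact eventuallyConst_iff_exists_eventuallyEq.1
    (eventuallyConst_atTop_nat.2 (eventually_atTop.1 hsucc))

variable (ψ) in
noncomputable def pathValue (x y : X) (γ : Path x y) : G :=
  Classical.epsilon fun g => ∀ᶠ n in atTop, subdivisionProd ψ γ n = g

theorem IsHomOnCover.eventually_subdivisionProd_eq_pathValue (hψ : IsHomOnCover U ψ)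
    (hopen : ∀ i, IsOpen (U i)) (hcover : ∀ x : X, ∃ i, x ∈ U i) {x y : X} (γ : Path x y) :
    ∀ᶠ n in atTop, subdivisionProd ψ γ n = pathValue ψ x y γ :=
  Classical.epsilon_spec (hψ.exists_eventually_subdivisionProd_eq hopen hcover γ)

theorem subdivisionProd_eq_of_isCocycleOn {x y : X} {γ : Path x y}
    (h : IsCocycleOn (segmentValue ψ γ.extend) univ) {n : ℕ} (hn : n ≠ 0) :
    subdivisionProd ψ γ n = ψ x y γ := by
  rw [subdivisionProd, h.chainProd_eq (fun _ => mem_univ _)]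
  simp only [Nat.cast_zero, zero_div, div_self (Nat.cast_ne_zero (R := ℝ) |>.2 hn)]
  exact apply_eq_of_forall_apply_eq ψ fun t => by simp [AffineMap.lineMap_apply_module]

theorem IsHomOnCover.pathValue_eq_of_range_subset (hψ : IsHomOnCover U ψ)
    (hopen : ∀ i, IsOpen (U i)) (hcover : ∀ x : X, ∃ i, x ∈ U i) {i : ι} {x y : X}
    {γ : Path x y} (hγ : range γ ⊆ U i) : pathValue ψ x y γ = ψ x y γ := by
  have hL : IsCocycleOn (segmentValue ψ γ.extend) univ :=
    hψ.isCocycleOn_segmentValue _ convex_univ (by rwa [image_univ, Path.extend_range])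
  obtain ⟨n, hn, hn0⟩ := ((hψ.eventually_subdivisionProd_eq_pathValue hopen hcover γ).and
    (eventually_ne_atTop 0)).exists
  rw [← hn, subdivisionProd_eq_of_isCocycleOn hL hn0]

theorem IsHomOnCover.eq_pathValue (hψ : IsHomOnCover U ψ) (hopen : ∀ i, IsOpen (U i))
    (hcover : ∀ x : X, ∃ i, x ∈ U i) {Ψ : (x y : X) → Path x y → G}
    (hΨ : IsHomOnCover (fun _ : Unit => (univ : Set X)) Ψ)
    (hΨψ : ∀ i (x y : X) (γ : Path x y), range γ ⊆ U i → Ψ x y γ = ψ x y γ)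
    {x y : X} (γ : Path x y) : Ψ x y γ = pathValue ψ x y γ := by
  obtain ⟨δ, hδ, hball⟩ := exists_image_ball_subset hopen hcover γ.extend
    (isCompact_Icc (a := (0 : ℝ)) (b := 1))
  obtain ⟨n, hn, hn0, hnδ⟩ := ((hψ.eventually_subdivisionProd_eq_pathValue hopen hcover γ).and
    ((eventually_ne_atTop 0).and
      ((tendsto_const_div_atTop_nhds_zero_nat (1 : ℝ)).eventually (gt_mem_nhds hδ)))).exists
  have hΨL : IsCocycleOn (segmentValue Ψ γ.extend) univ :=
    hΨ.isCocycleOn_segmentValue _ convex_univ (i := ()) (subset_univ _)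
  rw [← hn, ← subdivisionProd_eq_of_isCocycleOn hΨL hn0]
  refine chainProd_congr fun k hk => ?_
  obtain ⟨i, hi⟩ := hball _ (natCast_div_mem_Icc hk.le)
  have hsucc : ((k + 1 : ℕ) : ℝ) / n ∈ ball ((k : ℝ) / n) δ := by
    rw [mem_ball, dist_comm, dist_natCast_div_succ]; exact hnδ
  exact hΨψ i _ _ _
    ((range_map_segment_subset _ (convex_ball _ _) (mem_ball_self hδ) hsucc).trans hi)

variable (ψ) in
theorem subdivisionProd_trans {x y z : X} (γ : Path x y) (μ : Path y z) (n : ℕ) :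
    subdivisionProd ψ (γ.trans μ) (2 * n) = subdivisionProd ψ γ n * subdivisionProd ψ μ n := by
  rcases n.eq_zero_or_pos with rfl | hn
  · simp [subdivisionProd, chainProd_zero]
  have hn' : (0 : ℝ) < n := by exact_mod_cast hn
  rw [subdivisionProd, two_mul, chainProd_add]
  congr 1 <;> refine chainProd_congr fun k hk => ?_
  · have hk' : (k : ℝ) + 1 ≤ n := by exact_mod_cast hk
    rw [segmentValue_trans_left ψ γ μ (by push_cast; rw [div_le_iff₀ (by positivity)]; linarith)
      (by push_cast; rw [div_le_iff₀ (by positivity)]; linarith)]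
    congr 1 <;> (push_cast; field_simp; ring)
  · have hk' : (k : ℝ) + 1 ≤ n := by exact_mod_cast hk
    rw [segmentValue_trans_right ψ γ μ (by push_cast; rw [le_div_iff₀ (by positivity)]; linarith)
      (by push_cast; rw [le_div_iff₀ (by positivity)]; linarith)]
    congr 1 <;> (push_cast; field_simp; ring)

theorem IsHomOnCover.pathValue_trans (hψ : IsHomOnCover U ψ) (hopen : ∀ i, IsOpen (U i))
    (hcover : ∀ x : X, ∃ i, x ∈ U i) {x y z : X} (γ : Path x y) (μ : Path y z) :
    pathValue ψ x z (γ.trans μ) = pathValue ψ x y γ * pathValue ψ y z μ := by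
  have hdouble := (tendsto_id.const_mul_atTop' two_pos).eventually
    (hψ.eventually_subdivisionProd_eq_pathValue hopen hcover (γ.trans μ))
  obtain ⟨n, hγμ, hγ, hμ⟩ := (hdouble.and
    ((hψ.eventually_subdivisionProd_eq_pathValue hopen hcover γ).and
      (hψ.eventually_subdivisionProd_eq_pathValue hopen hcover μ))).exists
  rw [← hγμ, ← hγ, ← hμ, id, subdivisionProd_trans]

theorem IsHomOnCover.exists_pathValue_eval_eq (hψ : IsHomOnCover U ψ)
    (hopen : ∀ i, IsOpen (U i)) (hcover : ∀ x : X, ∃ i, x ∈ U i) {x y : X} {γ γ' : Path x y}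
    (H : γ.Homotopy γ') : ∃ δ > 0, ∀ s s' : I, dist s s' < δ →
      pathValue ψ x y (H.eval s) = pathValue ψ x y (H.eval s') := by
  obtain ⟨δ, hδ, hball⟩ := exists_image_ball_subset hopen hcover H.extendToPlane
    ((isCompact_Icc (a := (0 : ℝ)) (b := 1)).prod isCompact_Icc)
  refine ⟨δ, hδ, fun s s' hss' => ?_⟩
  obtain ⟨n, hs, hs', hn0, hnδ⟩ := ((hψ.eventually_subdivisionProd_eq_pathValue hopen hcover _).and
    ((hψ.eventually_subdivisionProd_eq_pathValue hopen hcover _).and ((eventually_ne_atTop 0).and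
      ((tendsto_const_div_atTop_nhds_zero_nat (1 : ℝ)).eventually (gt_mem_nhds hδ))))).exists
  set L := segmentValue ψ H.extendToPlane
  set P : ℕ → ℝ × ℝ := fun k => ((s : ℝ), (k : ℝ) / n)
  set Q : ℕ → ℝ × ℝ := fun k => ((s' : ℝ), (k : ℝ) / n)
  have hrow : ∀ s : I, subdivisionProd ψ (H.eval s) n =
      chainProd L (fun k => ((s : ℝ), (k : ℝ) / n)) n := fun s =>
    chainProd_congr fun k _ => H.segmentValue_extendToPlane_row ψ s _ _
  have hsquares : ∀ k < n, ∃ S, IsCocycleOn L S ∧ P k ∈ S ∧ P (k + 1) ∈ S ∧ Q k ∈ S ∧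
      Q (k + 1) ∈ S := by
    intro k hk
    obtain ⟨i, hi⟩ := hball (P k) ⟨s.2, natCast_div_mem_Icc hk.le⟩
    have hss'' : dist (s' : ℝ) s < δ := by rwa [dist_comm, ← Subtype.dist_eq]
    have hsucc := dist_natCast_div_succ k n
    refine ⟨ball (P k) δ, hψ.isCocycleOn_segmentValue _ (convex_ball _ _) hi, mem_ball_self hδ,
      ?_, ?_, ?_⟩ <;> rw [mem_ball, Prod.dist_eq] <;> simp only [P, Q, dist_self] <;>
      rw [dist_comm] at hsucc <;> apply max_lt <;> linarith [dist_nonneg (x := (s : ℝ)) (y := s')]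
  have hbottom : L (P 0) (Q 0) = 1 := hψ.segmentValue_eq_one hcover fun t => by
    rw [H.extendToPlane_of_snd_eq_zero (by simp [P, Q, AffineMap.snd_lineMap]),
      H.extendToPlane_of_snd_eq_zero (by simp [P])]
  have htop : L (P n) (Q n) = 1 := hψ.segmentValue_eq_one hcover fun t => by
    have hn : (n : ℝ) / n = 1 := div_self (by exact_mod_cast hn0)
    rw [H.extendToPlane_of_snd_eq_one (by simp [P, Q, AffineMap.snd_lineMap, hn]),
      H.extendToPlane_of_snd_eq_one (by simp [P, hn])]
  rw [← hs, ← hs', hrow, hrow, chainProd_eq_of_squares hsquares, hbottom, htop, one_mul, inv_one,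
    mul_one]

theorem IsHomOnCover.pathValue_eq_of_homotopic (hψ : IsHomOnCover U ψ)
    (hopen : ∀ i, IsOpen (U i)) (hcover : ∀ x : X, ∃ i, x ∈ U i) {x y : X} {γ γ' : Path x y}
    (h : γ.Homotopic γ') : pathValue ψ x y γ = pathValue ψ x y γ' := by
  obtain ⟨H⟩ := h
  obtain ⟨δ, hδ, hH⟩ := hψ.exists_pathValue_eval_eq hopen hcover H
  have hlc : IsLocallyConstant fun s => pathValue ψ x y (H.eval s) :=
    (IsLocallyConstant.iff_eventually_eq _).2 fun s =>
      eventually_of_mem (ball_mem_nhds s hδ) fun s' hs' => hH s' s hs'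
  simpa only [H.eval_zero, H.eval_one] using hlc.apply_eq_of_preconnectedSpace 0 1

end HomOnCover

/-- **A van Kampen type theorem for group-valued homomorphisms on the fundamental
groupoid.** Given an open cover `U i` of `X` and compatible `G`-valued homomorphisms
`φ i` on the fundamental groupoids of the `U i`, there is a unique `G`-valued
homomorphism `Φ` on the fundamental groupoid of `X` extending all the `φ i`. -/
theorem exists_unique_groupoid_homomorphism_extending_cover
    {X : Type*} [TopologicalSpace X] {G : Type*} [Group G]
    {I : Type*} (U : I → Set X)
    (hopen : ∀ i, IsOpen (U i)) (hcover : ∀ x : X, ∃ i, x ∈ U i)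
    (φ : (i : I) → (x y : X) → Path x y → G)
    (hhom : ∀ i, ∀ (x y : X) (γ γ' : Path x y), Set.range ⇑γ ⊆ U i →
      Set.range ⇑γ' ⊆ U i → HomotopicIn (U i) γ γ' → φ i x y γ = φ i x y γ')
    (hmul : ∀ i, ∀ (x y z : X) (γ : Path x y) (μ : Path y z), Set.range ⇑γ ⊆ U i →
      Set.range ⇑μ ⊆ U i → φ i x z (γ.trans μ) = φ i x y γ * φ i y z μ)
    (hcompat : ∀ i j, ∀ (x y : X) (γ : Path x y), Set.range ⇑γ ⊆ U i ∩ U j →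
      φ i x y γ = φ j x y γ) :
    ∃! Φ : (x y : X) → Path x y → G,
      (∀ (x y : X) (γ γ' : Path x y), γ.Homotopic γ' → Φ x y γ = Φ x y γ') ∧
      (∀ (x y z : X) (γ : Path x y) (μ : Path y z),
        Φ x z (γ.trans μ) = Φ x y γ * Φ y z μ) ∧
      (∀ i, ∀ (x y : X) (γ : Path x y), Set.range ⇑γ ⊆ U i → Φ x y γ = φ i x y γ) := by
  have hψ := isHomOnCover_gluedValue hhom hmul hcompat
  refine ⟨pathValue (gluedValue U φ),
    ⟨fun x y γ γ' h => hψ.pathValue_eq_of_homotopic hopen hcover h,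
      fun x y z γ μ => hψ.pathValue_trans hopen hcover γ μ,
      fun i x y γ hγ =>
        (hψ.pathValue_eq_of_range_subset hopen hcover hγ).trans (gluedValue_eq hcompat hγ)⟩, ?_⟩
  rintro Ψ ⟨hΨhom, hΨmul, hΨφ⟩
  funext x y γ
  exact hψ.eq_pathValue hopen hcover (.of_global hΨhom hΨmul)
    (fun i x y γ hγ => (hΨφ i x y γ hγ).trans (gluedValue_eq hcompat hγ).symm) γ
end

section
/- Let Z : ℝⁿ → (ℝⁿ)* be a symmetric linear map and let 𝓑 ⊂ Sym(ℝⁿ)* be the open set of symmetric bilinear forms B on (ℝⁿ)* (viewed as maps) with Id − ZB invertible, with B̃ := B(Id − ZB)⁻¹. Then the map B ↦ n⁺(B̃) − n⁺(B) is locally constant on 𝓑 (constant on each connected component). -/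
/-!
Write `B̃ = B (1 - Z B)⁻¹` and `W = Z + Z B̃ Z`. From `B̃ = B + B̃ Z B = B + B Z B̃` one checks the
block congruence `L₁ᵀ diag(W, B) L₁ = L₂ᵀ diag(Z, B̃) L₂` with `L₁ = [[1, B], [0, 1]]` and
`L₂ = [[1, 0], [Z, 1]]`, so Sylvester's law of inertia gives `n⁺(W) + n⁺(B) = n⁺(Z) + n⁺(B̃)`,
i.e. `n⁺(B̃) - n⁺(B) = n⁺(W) - n⁺(Z)`. Now `W` is symmetric, depends continuously on `B`, and
has constant rank since `(1 - Z B) W = Z`. Both `n⁺` and `n⁻` are lower semicontinuous and their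
sum is the rank, so `n⁺(W)` is locally constant.
-/

open scoped Matrix

/-- Coindex (number of positive eigenvalues) of a symmetric matrix, defined as the largest
dimension of a subspace on which the associated quadratic form is positive definite. -/
noncomputable def matCoindex {n : ℕ} (M : Matrix (Fin n) (Fin n) ℝ) : ℕ :=
  sSup {m : ℕ | ∃ S : Submodule ℝ (Fin n → ℝ), Module.finrank ℝ S = m ∧
    ∀ x ∈ S, x ≠ 0 → 0 < x ⬝ᵥ M.mulVec x}

open Matrix QuadraticMap QuadraticForm Topology

theorem QuadraticForm.weightedSumSquares_prod_equivalent {R ι₁ ι₂ : Type*} [CommRing R]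
    [Fintype ι₁] [Fintype ι₂] (w₁ : ι₁ → R) (w₂ : ι₂ → R) :
    ((weightedSumSquares R w₁).prod (weightedSumSquares R w₂)).Equivalent
      (weightedSumSquares R (Sum.elim w₁ w₂)) :=
  ⟨{ (LinearEquiv.sumArrowLequivProdArrow ι₁ ι₂ R R).symm with
      map_app' := fun ⟨x₁, x₂⟩ => by simp [weightedSumSquares_apply, Fintype.sum_sum_type] }⟩

theorem QuadraticForm.sigPos_prod {𝕜 M₁ M₂ : Type*} [Field 𝕜] [LinearOrder 𝕜]
    [IsStrictOrderedRing 𝕜] [AddCommGroup M₁] [Module 𝕜 M₁] [AddCommGroup M₂] [Module 𝕜 M₂]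
    [FiniteDimensional 𝕜 M₁] [FiniteDimensional 𝕜 M₂]
    (Q₁ : QuadraticForm 𝕜 M₁) (Q₂ : QuadraticForm 𝕜 M₂) :
    sigPos (Q₁.prod Q₂) = sigPos Q₁ + sigPos Q₂ := by
  have : Invertible (2 : 𝕜) := invertibleOfNonzero two_ne_zero
  obtain ⟨w₁, e₁⟩ := Q₁.equivalent_weightedSumSquares
  obtain ⟨w₂, e₂⟩ := Q₂.equivalent_weightedSumSquares
  rw [((e₁.prod e₂).trans (weightedSumSquares_prod_equivalent w₁ w₂)).sigPos_eq,
    e₁.sigPos_eq, e₂.sigPos_eq, sigPos_weightedSumSquares, sigPos_weightedSumSquares,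
    sigPos_weightedSumSquares, ← Nat.card_coe_set_eq, ← Nat.card_coe_set_eq,
    ← Nat.card_coe_set_eq, Nat.card_congr Equiv.subtypeSum, Nat.card_sum]
  rfl

section MatrixQuadraticForm

variable {R m l : Type*} [CommRing R] [Fintype m] [DecidableEq m] [Fintype l] [DecidableEq l]

theorem Matrix.toQuadraticForm'_apply (M : Matrix m m R) (x : m → R) :
    M.toQuadraticForm' x = x ⬝ᵥ M *ᵥ x := by
  simp [Matrix.toQuadraticForm', toLinearMap₂'_apply']

theorem Matrix.toQuadraticForm'_neg (M : Matrix m m R) :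
    (-M).toQuadraticForm' = -M.toQuadraticForm' := by
  ext x
  simp [toQuadraticForm'_apply, neg_mulVec]

theorem Matrix.toQuadraticForm'_transpose_mul_mul_equivalent (M : Matrix m m R)
    {A : Matrix m m R} (hA : IsUnit A) :
    (Aᵀ * M * A).toQuadraticForm'.Equivalent M.toQuadraticForm' := by
  obtain ⟨hA⟩ := hA.nonempty_invertible
  refine ⟨{ A.toLinearEquiv' hA with map_app' := fun x => ?_ }⟩
  simp [toQuadraticForm'_apply, ← mulVec_mulVec, dotProduct_mulVec _ Aᵀ, vecMul_transpose]

theorem Matrix.prod_toQuadraticForm'_equivalent_fromBlocks (M : Matrix m m R)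
    (N : Matrix l l R) :
    (M.toQuadraticForm'.prod N.toQuadraticForm').Equivalent
      (fromBlocks M 0 0 N).toQuadraticForm' :=
  ⟨{ (LinearEquiv.sumArrowLequivProdArrow m l R R).symm with
      map_app' := fun ⟨x₁, x₂⟩ => by
        change (fromBlocks M 0 0 N).toQuadraticForm' (Sum.elim x₁ x₂) = _
        simp [toQuadraticForm'_apply, fromBlocks_mulVec, sumElim_dotProduct_sumElim] }⟩

end MatrixQuadraticForm

section ChartTransition

variable {R m : Type*} [CommRing R] [Fintype m] [DecidableEq m] {Z B B' : Matrix m m R}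

theorem Matrix.one_sub_mul_mul_mul_nonsing_inv (hU : IsUnit (1 - Z * B)) :
    (1 - B * Z) * (B * (1 - Z * B)⁻¹) = B := by
  rw [← Matrix.mul_assoc, show (1 - B * Z) * B = B * (1 - Z * B) by noncomm_ring,
    mul_nonsing_inv_cancel_right _ _ ((isUnit_iff_isUnit_det _).mp hU)]

theorem Matrix.mul_nonsing_inv_eq_add_mul_mul_mul (hU : IsUnit (1 - Z * B)) :
    B * (1 - Z * B)⁻¹ = B + B * (1 - Z * B)⁻¹ * Z * B :=
  calc B * (1 - Z * B)⁻¹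
        = B * (1 - Z * B)⁻¹ * (1 - Z * B) + B * (1 - Z * B)⁻¹ * Z * B := by noncomm_ring
    _ = B + B * (1 - Z * B)⁻¹ * Z * B := by
        rw [nonsing_inv_mul_cancel_right _ _ ((isUnit_iff_isUnit_det _).mp hU)]

theorem Matrix.mul_nonsing_inv_eq_add_mul_mul_mul' (hU : IsUnit (1 - Z * B)) :
    B * (1 - Z * B)⁻¹ = B + B * Z * (B * (1 - Z * B)⁻¹) :=
  calc B * (1 - Z * B)⁻¹
        = (1 - B * Z) * (B * (1 - Z * B)⁻¹) + B * Z * (B * (1 - Z * B)⁻¹) := by noncomm_ring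
    _ = B + B * Z * (B * (1 - Z * B)⁻¹) := by rw [one_sub_mul_mul_mul_nonsing_inv hU]

theorem Matrix.IsSymm.mul_nonsing_inv_one_sub_mul (hB : B.IsSymm) (hZ : Z.IsSymm)
    (hU : IsUnit (1 - Z * B)) : (B * (1 - Z * B)⁻¹).IsSymm := by
  have hT : (1 - Z * B)ᵀ = 1 - B * Z := by
    rw [transpose_sub, transpose_one, transpose_mul, hZ.eq, hB.eq]
  have hU' : IsUnit (1 - B * Z).det := by
    rw [← hT, det_transpose]
    exact (isUnit_iff_isUnit_det _).mp hU
  change (B * (1 - Z * B)⁻¹)ᵀ = _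
  rw [transpose_mul, transpose_nonsing_inv, hT, hB.eq]
  calc (1 - B * Z)⁻¹ * B = (1 - B * Z)⁻¹ * ((1 - B * Z) * (B * (1 - Z * B)⁻¹)) := by
        rw [one_sub_mul_mul_mul_nonsing_inv hU]
    _ = B * (1 - Z * B)⁻¹ := nonsing_inv_mul_cancel_left _ _ hU'

omit [DecidableEq m] in
theorem Matrix.IsSymm.mul_mul (hZ : Z.IsSymm) (hB : B.IsSymm) : (Z * B * Z).IsSymm := by
  rw [IsSymm, transpose_mul, transpose_mul, hZ.eq, hB.eq, Matrix.mul_assoc]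

theorem Matrix.rank_add_mul_mul_eq (h : B' = B + B * Z * B') (hU : IsUnit (1 - Z * B)) :
    (Z + Z * B' * Z).rank = Z.rank := by
  have : (1 - Z * B) * (Z + Z * B' * Z) = Z :=
    calc (1 - Z * B) * (Z + Z * B' * Z) = Z + Z * (B' - (B + B * Z * B')) * Z := by
          noncomm_ring
      _ = Z := by rw [← h, sub_self, Matrix.mul_zero, Matrix.zero_mul, add_zero]
  calc (Z + Z * B' * Z).rank = ((1 - Z * B) * (Z + Z * B' * Z)).rank :=
        (rank_mul_eq_right_of_isUnit_det _ _ ((isUnit_iff_isUnit_det _).mp hU)).symm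
    _ = Z.rank := by rw [this]

theorem Matrix.transpose_mul_fromBlocks_mul_eq (hZ : Z.IsSymm) (hB : B.IsSymm)
    (h₁ : B' = B + B' * Z * B) (h₂ : B' = B + B * Z * B') :
    (fromBlocks 1 B 0 1)ᵀ * fromBlocks (Z + Z * B' * Z) 0 0 B * fromBlocks 1 B 0 1 =
      (fromBlocks 1 0 Z 1)ᵀ * fromBlocks Z 0 0 B' * fromBlocks 1 0 Z 1 := by
  simp only [fromBlocks_transpose, transpose_one, transpose_zero, hB.eq, hZ.eq,
    fromBlocks_multiply]
  congr 1
  · noncomm_ring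
  · calc _ = Z * (B + B' * Z * B) := by noncomm_ring
      _ = _ := by rw [← h₁]; noncomm_ring
  · calc _ = (B + B * Z * B') * Z := by noncomm_ring
      _ = _ := by rw [← h₂]; noncomm_ring
  · calc _ = B + B * Z * (B + B' * Z * B) := by noncomm_ring
      _ = _ := by rw [← h₁, ← h₂]; noncomm_ring

end ChartTransition

section Inertia

variable {𝕜 m : Type*} [Field 𝕜] [Fintype m] [DecidableEq m]

theorem Matrix.IsSymm.radical_toQuadraticForm' [NeZero (2 : 𝕜)] {M : Matrix m m 𝕜}
    (hM : M.IsSymm) : M.toQuadraticForm'.radical = LinearMap.ker M.mulVecLin := by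
  have : Invertible (2 : 𝕜) := invertibleOfNonzero two_ne_zero
  ext x
  have key (y : m → 𝕜) : x ⬝ᵥ M *ᵥ y + y ⬝ᵥ M *ᵥ x = 2 * (M *ᵥ x ⬝ᵥ y) := by
    rw [dotProduct_mulVec, ← mulVec_transpose, hM.eq, dotProduct_comm y]
    ring
  simp [radical_eq_ker_polarBilin, LinearMap.ext_iff, Matrix.toQuadraticForm',
    LinearMap.BilinMap.polar_toQuadraticMap, toLinearMap₂'_apply', key, two_ne_zero,
    dotProduct_eq_zero_iff]

theorem Matrix.IsSymm.sigPos_add_sigNeg [LinearOrder 𝕜] [IsStrictOrderedRing 𝕜]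
    {M : Matrix m m 𝕜} (hM : M.IsSymm) :
    sigPos M.toQuadraticForm' + sigNeg M.toQuadraticForm' = M.rank := by
  have h := sigPos_add_sigNeg_add_radical (Q := M.toQuadraticForm')
  rw [hM.radical_toQuadraticForm', ← M.mulVecLin.finrank_range_add_finrank_ker] at h
  simpa [Matrix.rank] using h

theorem Matrix.sigPos_add_sigPos_eq_sigPos_add_sigPos [LinearOrder 𝕜]
    [IsStrictOrderedRing 𝕜] {Z B B' : Matrix m m 𝕜} (hZ : Z.IsSymm) (hB : B.IsSymm)
    (h₁ : B' = B + B' * Z * B) (h₂ : B' = B + B * Z * B') :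
    sigPos (Z + Z * B' * Z).toQuadraticForm' + sigPos B.toQuadraticForm' =
      sigPos Z.toQuadraticForm' + sigPos B'.toQuadraticForm' := by
  have hL₁ : IsUnit (fromBlocks 1 B 0 1 : Matrix (m ⊕ m) (m ⊕ m) 𝕜) :=
    (isUnit_iff_isUnit_det _).mpr (by simp)
  have hL₂ : IsUnit (fromBlocks 1 0 Z 1 : Matrix (m ⊕ m) (m ⊕ m) 𝕜) :=
    (isUnit_iff_isUnit_det _).mpr (by simp)
  rw [← sigPos_prod, ← sigPos_prod,
    (prod_toQuadraticForm'_equivalent_fromBlocks (Z + Z * B' * Z) B).sigPos_eq,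
    (prod_toQuadraticForm'_equivalent_fromBlocks Z B').sigPos_eq,
    ← (toQuadraticForm'_transpose_mul_mul_equivalent _ hL₁).sigPos_eq,
    transpose_mul_fromBlocks_mul_eq hZ hB h₁ h₂,
    (toQuadraticForm'_transpose_mul_mul_equivalent _ hL₂).sigPos_eq]

end Inertia

section Topology

theorem Continuous.matrix_nonsing_inv {X 𝕜 m : Type*} [TopologicalSpace X] [Field 𝕜]
    [TopologicalSpace 𝕜] [IsTopologicalDivisionRing 𝕜] [Fintype m] [DecidableEq m]
    {f : X → Matrix m m 𝕜} (hf : Continuous f) (h : ∀ x, IsUnit (f x)) :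
    Continuous fun x => (f x)⁻¹ := by
  refine continuous_iff_continuousAt.mpr fun x =>
    (continuousAt_matrix_inv _ ?_).comp hf.continuousAt
  rw [Ring.inverse_eq_inv']
  exact continuousAt_inv₀ ((isUnit_iff_isUnit_det _).mp (h x)).ne_zero

variable {m : Type*} [Fintype m] [DecidableEq m]

theorem Matrix.eventually_sigPos_toQuadraticForm'_le (M : Matrix m m ℝ) :
    ∀ᶠ N in 𝓝 M, sigPos M.toQuadraticForm' ≤ sigPos N.toQuadraticForm' := by
  obtain ⟨V, hV, hpos⟩ := exists_finrank_eq_sigPos_and_posDef M.toQuadraticForm'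
  set K : Set (m → ℝ) := V ∩ Metric.sphere 0 1
  have hK : IsCompact K := (isCompact_sphere 0 1).inter_left V.closed_of_finiteDimensional
  have hcont : Continuous fun p : Matrix m m ℝ × (m → ℝ) => p.1.toQuadraticForm' p.2 := by
    simp only [toQuadraticForm'_apply]
    exact continuous_snd.dotProduct (continuous_fst.matrix_mulVec continuous_snd)
  have hK_pos : ∀ᶠ N in 𝓝 M, ∀ x ∈ K, 0 < N.toQuadraticForm' x := by
    refine hK.eventually_forall_of_forall_eventually fun x hx => ?_
    have hx0 : x ≠ 0 := ne_zero_of_mem_sphere one_ne_zero ⟨x, hx.2⟩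
    exact hcont.continuousAt.eventually <|
      eventually_gt_nhds (hpos ⟨x, hx.1⟩ (by simpa using hx0))
  filter_upwards [hK_pos] with N hN
  refine hV ▸ le_sigPos_of_posDef _ fun ⟨x, hxV⟩ hx0 => ?_
  have hx : ‖x‖ ≠ 0 := by simpa using hx0
  have hxK : ‖x‖⁻¹ • x ∈ K := ⟨V.smul_mem _ hxV, by simp [norm_smul, hx]⟩
  have := hN _ hxK
  rw [QuadraticMap.map_smul] at this
  simpa [restrict_apply, hx] using this

theorem Matrix.isLocallyConstant_sigPos_toQuadraticForm'_of_rank_eq {X : Type*} [TopologicalSpace X]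
    {W : X → Matrix m m ℝ} (hW : Continuous W) (hsymm : ∀ x, (W x).IsSymm) {r : ℕ}
    (hrank : ∀ x, (W x).rank = r) :
    IsLocallyConstant fun x => sigPos (W x).toQuadraticForm' := by
  refine (IsLocallyConstant.iff_eventually_eq _).mpr fun x => ?_
  have hpos := hW.continuousAt.eventually (eventually_sigPos_toQuadraticForm'_le (W x))
  have hneg := hW.neg.continuousAt.eventually (eventually_sigPos_toQuadraticForm'_le (-W x))
  filter_upwards [hpos, hneg] with y hpos_y hneg_y
  rw [Pi.neg_apply, toQuadraticForm'_neg, toQuadraticForm'_neg, sigPos_neg, sigPos_neg] at hneg_y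
  have hx := (hsymm x).sigPos_add_sigNeg
  have hy := (hsymm y).sigPos_add_sigNeg
  rw [hrank] at hx hy
  omega

end Topology

theorem matCoindex_eq_sigPos {n : ℕ} (M : Matrix (Fin n) (Fin n) ℝ) :
    matCoindex M = sigPos M.toQuadraticForm' := by
  rw [matCoindex, ← (sigPos_isGreatest M.toQuadraticForm').csSup_eq]
  congr! 7 with k S
  simp [QuadraticMap.PosDef, toQuadraticForm'_apply]

/-- **Local constancy of the coindex difference under the chart transition.**
For a fixed symmetric `Z`, on the open set of symmetric `B` with `Id − ZB` invertible, the
map `B ↦ n⁺(B̃) − n⁺(B)`, with `B̃ = B (Id − ZB)⁻¹`, is locally constant (hence constant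
on each connected component). -/
theorem coindex_difference_locallyConstant
    {n : ℕ} (Z : Matrix (Fin n) (Fin n) ℝ) (hZ : Z.IsSymm) :
    IsLocallyConstant
      (fun B : {B : Matrix (Fin n) (Fin n) ℝ // B.IsSymm ∧ IsUnit (1 - Z * B)} =>
        (matCoindex (B.1 * (1 - Z * B.1)⁻¹) : ℤ) - (matCoindex B.1 : ℤ)) := by
  let 𝓑 := {B : Matrix (Fin n) (Fin n) ℝ // B.IsSymm ∧ IsUnit (1 - Z * B)}
  have hsymm (B : 𝓑) := B.2.1.mul_nonsing_inv_one_sub_mul hZ B.2.2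
  have hT : Continuous fun B : 𝓑 => (1 - Z * B.1)⁻¹ :=
    (continuous_const.sub (continuous_const.matrix_mul continuous_subtype_val)).matrix_nonsing_inv
      fun B => B.2.2
  have hW : Continuous fun B : 𝓑 => Z + Z * (B.1 * (1 - Z * B.1)⁻¹) * Z :=
    continuous_const.add <|
      (continuous_const.matrix_mul (continuous_subtype_val.matrix_mul hT)).matrix_mul
        continuous_const
  have hloc := isLocallyConstant_sigPos_toQuadraticForm'_of_rank_eq hW
    (fun B => hZ.add (hZ.mul_mul (hsymm B)))
    fun B => rank_add_mul_mul_eq (mul_nonsing_inv_eq_add_mul_mul_mul' B.2.2) B.2.2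
  convert hloc.comp fun k : ℕ => (k : ℤ) - sigPos Z.toQuadraticForm' with B
  have := sigPos_add_sigPos_eq_sigPos_add_sigPos hZ B.2.1
    (mul_nonsing_inv_eq_add_mul_mul_mul B.2.2) (mul_nonsing_inv_eq_add_mul_mul_mul' B.2.2)
  simp only [Function.comp_apply, matCoindex_eq_sigPos]
  omega
end

section
/- Let V be a real finite-dimensional vector space, g a nondegenerate symmetric bilinear form on V, and T : V → V a nilpotent g-symmetric endomorphism (g(T·,·) is symmetric and Tⁿ = 0). For k ≥ 1 set W_k = T^{k-1}(Ker(T^k)) and define B_k : W_k × W_k → ℝ by B_k(a,b) = g(c,b) where a = T^{k-1}(c), c ∈ Ker(T^k). Then W_{k+1} ⊆ W_k, B_k is a well-defined symmetric bilinear form, and W_{k+1} = Ker(B_k); in particular B_n is nondegenerate on W_n whenever W_n ≠ 0 and W_{n+1} = 0. -/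
/-!
Writing `W_{j+1} = T^j (Ker T^{j+1}) = Im T^j ∩ Ker T`, the filtration `W_{j+2} ⊆ W_{j+1}` is
`Im T^{j+1} ⊆ Im T^j`. Since `T^j` is `g`-symmetric, `B_{j+1}(T^j c, b) = g(c, b) = g(T^j c, d)`
for `b = T^j d`, which gives well-definedness and symmetry. The radical of `B_{j+1}` is
`W_{j+1} ∩ (Ker T^{j+1})^⊥`, and nondegeneracy of `g` gives `(Ker S)^⊥ = Im S` for every
`g`-symmetric `S` by a dimension count, so the radical is `W_{j+1} ∩ Im T^{j+1} = W_{j+2}`.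
For `T^n = 0` this already gives `(Ker T^n)^⊥ = Im T^n = 0`.
-/

open LinearMap Module

section Filtration

variable {R M : Type*} [Semiring R] [AddCommMonoid M] [Module R M] (T : Module.End R M)

theorem Module.End.map_pow_ker_pow_add (a b : ℕ) :
    (ker (T ^ (a + b))).map (T ^ a) = range (T ^ a) ⊓ ker (T ^ b) := by
  rw [add_comm, pow_add, Module.End.mul_eq_comp, ker_comp, Submodule.map_comap_eq]

theorem Module.End.map_pow_succ_ker_eq_inf_range (j : ℕ) :
    (ker (T ^ (j + 2))).map (T ^ (j + 1)) =
      (ker (T ^ (j + 1))).map (T ^ j) ⊓ range (T ^ (j + 1)) := by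
  have hrange : range (T ^ (j + 1)) ≤ range (T ^ j) := by
    rw [pow_succ, Module.End.mul_eq_comp]
    exact range_comp_le_range _ _
  rw [T.map_pow_ker_pow_add (j + 1) 1, T.map_pow_ker_pow_add j 1, inf_right_comm,
    inf_eq_right.mpr hrange]

end Filtration

theorem LinearMap.IsAdjointPair.pow {R M : Type*} [CommSemiring R] [AddCommMonoid M] [Module R M]
    {B : LinearMap.BilinForm R M} {T : Module.End R M} (hT : IsAdjointPair B B T T) (m : ℕ) :
    IsAdjointPair B B ⇑(T ^ m) ⇑(T ^ m) := by
  induction m with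
  | zero => exact isAdjointPair_one
  | succ m ih =>
    have := ih.mul hT
    rwa [← pow_succ, ← pow_succ'] at this

theorem LinearMap.BilinForm.orthogonal_ker_eq_range {K V : Type*} [Field K] [AddCommGroup V]
    [Module K V] [FiniteDimensional K V] {B : LinearMap.BilinForm K V} (hB : B.Nondegenerate)
    {S : Module.End K V} (hS : IsAdjointPair B B S S) :
    B.orthogonal (ker S) = range S := by
  have hle : range S ≤ B.orthogonal (ker S) := by
    rintro _ ⟨a, rfl⟩ c hc
    rw [← hS, mem_ker.mp hc, map_zero, LinearMap.zero_apply]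
  refine (Submodule.eq_of_le_of_finrank_le hle ?_).symm
  have := finrank_range_add_finrank_ker S
  rw [finrank_orthogonal hB]
  omega

/-- **Partial signature filtration of a nilpotent `g`-symmetric endomorphism.**
For `g` nondegenerate symmetric and `T` nilpotent `g`-symmetric, with
`W_k = T^{k-1}(Ker T^k)` and `B_k(a,b) = g(c,b)` for `a = T^{k-1} c`, `c ∈ Ker T^k`:
`W_{k+1} ⊆ W_k`, `B_k` is well defined and symmetric, and `W_{k+1} = Ker B_k`;
in particular `B_n` is nondegenerate on `W_n`. -/
theorem nilpotent_partial_signature_filtration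
    {V : Type*} [AddCommGroup V] [Module ℝ V] [FiniteDimensional ℝ V]
    (g : LinearMap.BilinForm ℝ V) (hgs : ∀ x y : V, g x y = g y x)
    (hnd : g.Nondegenerate)
    (T : V →ₗ[ℝ] V) (n : ℕ) (hnil : T ^ n = 0)
    (hTsym : ∀ x y : V, g (T x) y = g x (T y)) :
    (∀ k : ℕ, 1 ≤ k →
      Submodule.map (T ^ k) (LinearMap.ker (T ^ (k + 1)))
        ≤ Submodule.map (T ^ (k - 1)) (LinearMap.ker (T ^ k))) ∧
    (∀ k : ℕ, 1 ≤ k → ∀ c ∈ LinearMap.ker (T ^ k), ∀ c' ∈ LinearMap.ker (T ^ k),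
      (T ^ (k - 1)) c = (T ^ (k - 1)) c' →
      ∀ b ∈ Submodule.map (T ^ (k - 1)) (LinearMap.ker (T ^ k)), g c b = g c' b) ∧
    (∀ k : ℕ, 1 ≤ k → ∀ c ∈ LinearMap.ker (T ^ k), ∀ d ∈ LinearMap.ker (T ^ k),
      g c ((T ^ (k - 1)) d) = g d ((T ^ (k - 1)) c)) ∧
    (∀ k : ℕ, 1 ≤ k → ∀ b : V,
      b ∈ Submodule.map (T ^ k) (LinearMap.ker (T ^ (k + 1))) ↔
        (b ∈ Submodule.map (T ^ (k - 1)) (LinearMap.ker (T ^ k)) ∧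
          ∀ c ∈ LinearMap.ker (T ^ k), g c b = 0)) ∧
    (∀ b ∈ Submodule.map (T ^ (n - 1)) (LinearMap.ker (T ^ n)),
      (∀ c ∈ LinearMap.ker (T ^ n), g c b = 0) → b = 0) := by
  have hpow (m : ℕ) : IsAdjointPair g g ⇑(T ^ m) ⇑(T ^ m) := IsAdjointPair.pow hTsym m
  have hortho (m : ℕ) : g.orthogonal (ker (T ^ m)) = range (T ^ m) :=
    LinearMap.BilinForm.orthogonal_ker_eq_range hnd (hpow m)
  have of_succ {P : ℕ → Prop} (h : ∀ j, P (j + 1)) (k : ℕ) (hk : 1 ≤ k) : P k := by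
    obtain ⟨j, rfl⟩ := Nat.exists_eq_add_of_le' hk
    exact h j
  refine ⟨of_succ fun j => ?_, of_succ fun j => ?_, of_succ fun j => ?_, of_succ fun j => ?_, ?_⟩
  · exact (End.map_pow_succ_ker_eq_inf_range T j).trans_le inf_le_left
  · rintro c - c' - hcc' _ ⟨d, -, rfl⟩
    rw [← hpow, ← hpow, hcc']
  · intro c _ d _
    rw [← hpow, hgs]
  · intro b
    rw [End.map_pow_succ_ker_eq_inf_range T j, Submodule.mem_inf, ← hortho,
      LinearMap.BilinForm.mem_orthogonal_iff, Nat.add_sub_cancel]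
  · intro b _ hb
    have hb' : b ∈ range (T ^ n) := hortho n ▸ hb
    rwa [hnil, range_zero, Submodule.mem_bot] at hb'
end

section
/- Let H be a Hilbert space and let V, W, V', W' be subspaces with V, W closed and commensurable, V', W' finite-dimensional, V' ⊆ V^⊥ and W' ⊆ W^⊥. Then V + V' and W + W' are closed and commensurable, and dim_{W+W'}(V+V') = dim_W(V) + dim(V') − dim(W'). -/
open scoped RealInnerProductSpace

/-- Two closed subspaces `V`, `W` of a Hilbert space are commensurable if the orthogonal
projection `P_W|_V : V → W` is Fredholm; equivalently, `(V, Wᗮ)` is a Fredholm pair: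
`V ⊓ Wᗮ` and `Vᗮ ⊓ W` are finite-dimensional and `V ⊔ Wᗮ` is closed. -/
def CommensurableSubspaces {H : Type*} [NormedAddCommGroup H] [InnerProductSpace ℝ H]
    (V W : Submodule ℝ H) : Prop :=
  FiniteDimensional ℝ ↥(V ⊓ Wᗮ) ∧ FiniteDimensional ℝ ↥(Vᗮ ⊓ W) ∧
    IsClosed ((V ⊔ Wᗮ : Submodule ℝ H) : Set H)

/-- The relative dimension of `V` with respect to `W`:
`dim_W(V) = dim(V ∩ W^⊥) − dim(V^⊥ ∩ W)`. -/
noncomputable def relDim {H : Type*} [NormedAddCommGroup H] [InnerProductSpace ℝ H]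
    (V W : Submodule ℝ H) : ℤ :=
  (Module.finrank ℝ ↥(V ⊓ Wᗮ) : ℤ) - (Module.finrank ℝ ↥(Vᗮ ⊓ W) : ℤ)

/-!
Adding `V'` to `V` with `W` fixed: put `S = V + Wᗮ`, a closed subspace with `Sᗮ = Vᗮ ∩ W`. The
kernel part `(V + V') ∩ Wᗮ` gains `dim (V' ∩ S)` dimensions, while the cokernel part
`(V + V')ᗮ ∩ W = Sᗮ ∩ V'ᗮ` loses `dim V' - dim (V' ∩ S)`, because the pairing `V' × Sᗮ → ℝ` has left
kernel `V' ∩ Sᗮᗮ = V' ∩ S`. So the relative dimension rises by `dim V'`.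

Adding `W'` to `W` reduces to the first case by swapping the roles of the two subspaces, since
`dim_V(W) = -dim_W(V)` and commensurability is symmetric: if `V + Wᗮ` is closed then so is
`Vᗮ + W`, by the open mapping theorem applied to `V × Wᗮ → V + Wᗮ`.
-/

open Submodule Module
open scoped InnerProductSpace

section LinearAlgebra

variable {K E F : Type*} [DivisionRing K] [AddCommGroup E] [Module K E]
  [AddCommGroup F] [Module K F]

lemma Submodule.finrank_map_add_finrank_inf_ker (f : E →ₗ[K] F) (M : Submodule K E)
    [FiniteDimensional K M] :
    finrank K (M.map f) + finrank K ↥(M ⊓ LinearMap.ker f) = finrank K M := by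
  rw [← (f.domRestrict M).finrank_range_add_finrank_ker, LinearMap.range_domRestrict,
    ← map_comap_subtype, finrank_map_subtype_eq, LinearMap.ker_domRestrict]

lemma Submodule.map_mkQ_sup_inf (V V' Z : Submodule K E) :
    ((V ⊔ V') ⊓ Z).map V.mkQ = (V' ⊓ (V ⊔ Z)).map V.mkQ := by
  have modular : V ⊔ (V ⊔ V') ⊓ Z = V ⊔ V' ⊓ (V ⊔ Z) := by
    rw [sup_comm, inf_sup_assoc_of_le _ le_sup_left, sup_comm Z,
      sup_inf_assoc_of_le _ le_sup_left]
  rw [← map_comap_eq_of_surjective V.mkQ_surjective (map _ _), comap_map_mkQ, modular,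
    ← comap_map_mkQ, map_comap_eq_of_surjective V.mkQ_surjective]

lemma Submodule.finiteDimensional_sup_inf (V V' Z : Submodule K E) [FiniteDimensional K V']
    [FiniteDimensional K ↥(V ⊓ Z)] : FiniteDimensional K ↥((V ⊔ V') ⊓ Z) := by
  have : FiniteDimensional K ↥(((V ⊔ V') ⊓ Z).map V.mkQ) := by
    rw [map_mkQ_sup_inf]; infer_instance
  have : FiniteDimensional K ↥((V ⊔ V') ⊓ Z ⊓ LinearMap.ker V.mkQ) := by
    rwa [ker_mkQ, inf_right_comm, inf_of_le_right (le_sup_left : V ≤ V ⊔ V')]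
  exact .of_fg <| fg_of_fg_map_of_fg_inf_ker V.mkQ .of_finite .of_finite

lemma Submodule.finrank_sup_inf_of_disjoint (V V' Z : Submodule K E) (h : Disjoint V V')
    [FiniteDimensional K V'] [FiniteDimensional K ↥(V ⊓ Z)] :
    finrank K ↥((V ⊔ V') ⊓ Z) = finrank K ↥(V ⊓ Z) + finrank K ↥(V' ⊓ (V ⊔ Z)) := by
  have := finiteDimensional_sup_inf V V' Z
  have hN : V' ⊓ (V ⊔ Z) ⊓ LinearMap.ker V.mkQ = ⊥ := by
    rw [ker_mkQ]; exact disjoint_iff.1 (h.symm.mono_left inf_le_left)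
  have hM := finrank_map_add_finrank_inf_ker V.mkQ ((V ⊔ V') ⊓ Z)
  have hN' := finrank_map_add_finrank_inf_ker V.mkQ (V' ⊓ (V ⊔ Z))
  rw [ker_mkQ, inf_right_comm, inf_of_le_right (le_sup_left : V ≤ V ⊔ V'),
    map_mkQ_sup_inf] at hM
  rw [hN, finrank_bot] at hN'
  omega

end LinearAlgebra

section InnerProduct

variable {𝕜 E : Type*} [RCLike 𝕜] [NormedAddCommGroup E] [InnerProductSpace 𝕜 E]

lemma Submodule.finrank_inf_orthogonal_add_finrank (X Y : Submodule 𝕜 E)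
    [FiniteDimensional 𝕜 X] [FiniteDimensional 𝕜 Y] :
    finrank 𝕜 ↥(Y ⊓ Xᗮ) + finrank 𝕜 X = finrank 𝕜 ↥(X ⊓ Yᗮ) + finrank 𝕜 Y := by
  set P := (Y.starProjection : E →ₗ[𝕜] E)
  have hle : X.map P ≤ Y := by
    rintro _ ⟨x, -, rfl⟩
    exact Y.starProjection_apply_mem x
  have horth : (X.map P)ᗮ ⊓ Y = Y ⊓ Xᗮ := by
    rw [inf_comm]
    ext y
    simp only [mem_inf, mem_orthogonal, mem_map, forall_exists_index, and_imp,
      forall_apply_eq_imp_iff₂]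
    refine and_congr_right fun hy => forall₂_congr fun x _ => ?_
    rw [show P x = Y.starProjection x from rfl, inner_starProjection_left_eq_right,
      starProjection_eq_self_iff.2 hy]
  have hY := finrank_add_inf_finrank_orthogonal hle
  have hX := finrank_map_add_finrank_inf_ker P X
  rw [horth] at hY
  rw [show LinearMap.ker P = Yᗮ from ker_starProjection Y] at hX
  omega

end InnerProduct

section Banach

variable {𝕜 E : Type*} [NontriviallyNormedField 𝕜] [NormedAddCommGroup E] [NormedSpace 𝕜 E]
  [CompleteSpace E]

lemma Submodule.exists_mem_sup_norm_le {X Y : Submodule 𝕜 E} (hX : IsClosed (X : Set E))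
    (hY : IsClosed (Y : Set E)) (hXY : IsClosed ((X ⊔ Y : Submodule 𝕜 E) : Set E)) :
    ∃ C > 0, ∀ z ∈ X ⊔ Y, ∃ x ∈ X, ∃ y ∈ Y, x + y = z ∧ ‖x‖ ≤ C * ‖z‖ := by
  have := hX.completeSpace_coe
  have := hY.completeSpace_coe
  have := hXY.completeSpace_coe
  let φ : X × Y →L[𝕜] ↥(X ⊔ Y) := (X.subtypeL.coprod Y.subtypeL).codRestrict _
    fun p => add_mem_sup p.1.2 p.2.2
  have hφ : Function.Surjective φ := by
    rintro ⟨z, hz⟩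
    obtain ⟨x, hx, y, hy, rfl⟩ := mem_sup.1 hz
    exact ⟨(⟨x, hx⟩, ⟨y, hy⟩), rfl⟩
  obtain ⟨C, hC0, hC⟩ := φ.exists_preimage_norm_le hφ
  refine ⟨C, hC0, fun z hz => ?_⟩
  obtain ⟨p, hp, hpz⟩ := hC ⟨z, hz⟩
  exact ⟨p.1, p.1.2, p.2, p.2.2, congrArg Subtype.val hp, (norm_fst_le p).trans hpz⟩

lemma Submodule.isClosed_sup_of_norm_le {X Y : Submodule 𝕜 E} (hX : IsClosed (X : Set E))
    (hY : IsClosed (Y : Set E)) (C : ℝ) (h : ∀ x ∈ X, ∀ y ∈ Y, ‖y‖ ≤ C * ‖x + y‖) :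
    IsClosed ((X ⊔ Y : Submodule 𝕜 E) : Set E) := by
  have := hX.completeSpace_coe
  have := hY.completeSpace_coe
  let ψ : X × Y →L[𝕜] E := X.subtypeL.coprod Y.subtypeL
  have hψ : AntilipschitzWith (1 + C).toNNReal ψ := by
    refine ψ.antilipschitz_of_bound fun p => ?_
    have hy := h p.1 p.1.2 p.2 p.2.2
    have hx : ‖(p.1 : E)‖ ≤ ‖(p.1 : E) + p.2‖ + ‖(p.2 : E)‖ := norm_le_add_norm_add _ _
    refine (max_le ?_ ?_).trans (mul_le_mul_of_nonneg_right (Real.le_coe_toNNReal _)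
      (norm_nonneg _))
    · change ‖(p.1 : E)‖ ≤ (1 + C) * ‖(p.1 : E) + p.2‖
      linarith
    · change ‖(p.2 : E)‖ ≤ (1 + C) * ‖(p.1 : E) + p.2‖
      linarith [norm_nonneg ((p.1 : E) + p.2)]
  have hrange : Set.range ψ = ((X ⊔ Y : Submodule 𝕜 E) : Set E) := by
    ext z
    constructor
    · rintro ⟨p, rfl⟩
      exact add_mem_sup p.1.2 p.2.2
    · intro hz
      obtain ⟨x, hx, y, hy, rfl⟩ := mem_sup.1 hz
      exact ⟨(⟨x, hx⟩, ⟨y, hy⟩), rfl⟩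
  exact hrange ▸ hψ.isClosed_range ψ.uniformContinuous

end Banach

section Hilbert

variable {𝕜 E : Type*} [RCLike 𝕜] [NormedAddCommGroup E] [InnerProductSpace 𝕜 E] [CompleteSpace E]

theorem Submodule.isClosed_orthogonal_sup {V W : Submodule 𝕜 E} (hV : IsClosed (V : Set E))
    (hW : IsClosed (W : Set E)) (hVW : IsClosed ((V ⊔ Wᗮ : Submodule 𝕜 E) : Set E)) :
    IsClosed ((Vᗮ ⊔ W : Submodule 𝕜 E) : Set E) := by
  set S := V ⊔ Wᗮ
  have := hW.completeSpace_coe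
  have := hVW.completeSpace_coe
  have hSW : Sᗮ ≤ W := by
    simpa only [orthogonal_orthogonal] using orthogonal_le (le_sup_right : Wᗮ ≤ S)
  have hdecomp : Vᗮ ⊔ W = Vᗮ ⊔ W ⊓ S := by
    refine le_antisymm (sup_le le_sup_left fun w hw => ?_) (sup_le_sup_left inf_le_left _)
    obtain ⟨s, hs, t, ht, rfl⟩ := S.exists_add_mem_mem_orthogonal w
    rw [add_comm]
    exact add_mem_sup (orthogonal_le le_sup_left ht) ⟨(W.add_mem_iff_left (hSW ht)).1 hw, hs⟩
  obtain ⟨C, hC0, hC⟩ := exists_mem_sup_norm_le hV (isClosed_orthogonal W) hVW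
  have hbound : ∀ a ∈ Vᗮ, ∀ b ∈ W ⊓ S, ‖b‖ ≤ C * ‖a + b‖ := by
    rintro a ha b ⟨hbW, hbS⟩
    obtain ⟨v, hv, w, hw, hvw, hvb⟩ := hC b hbS
    have hinner : ⟪a + b, v⟫_𝕜 = ⟪b, b⟫_𝕜 := by
      rw [inner_add_left, inner_left_of_mem_orthogonal hv ha, zero_add, eq_sub_of_add_eq hvw,
        inner_sub_right, inner_right_of_mem_orthogonal hbW hw, sub_zero]
    have hsq : ‖b‖ ^ 2 ≤ ‖a + b‖ * (C * ‖b‖) := by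
      calc ‖b‖ ^ 2 = ‖⟪a + b, v⟫_𝕜‖ := by
            rw [hinner, inner_self_eq_norm_sq_to_K, norm_pow, RCLike.norm_ofReal, abs_norm]
        _ ≤ ‖a + b‖ * ‖v‖ := norm_inner_le_norm _ _
        _ ≤ ‖a + b‖ * (C * ‖b‖) := by gcongr
    nlinarith [mul_nonneg hC0.le (norm_nonneg (a + b))]
  rw [hdecomp]
  exact isClosed_sup_of_norm_le (isClosed_orthogonal V) (hW.inter hVW) C hbound

end Hilbert

section Commensurable

variable {H : Type*} [NormedAddCommGroup H] [InnerProductSpace ℝ H]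

theorem relDim_comm (V W : Submodule ℝ H) : relDim W V = -relDim V W := by
  rw [relDim, relDim, inf_comm W, inf_comm Wᗮ]
  ring

theorem CommensurableSubspaces.symm [CompleteSpace H] {V W : Submodule ℝ H}
    (hV : IsClosed (V : Set H)) (hW : IsClosed (W : Set H)) (h : CommensurableSubspaces V W) :
    CommensurableSubspaces W V := by
  obtain ⟨hker, hcoker, hclosed⟩ := h
  refine ⟨by rwa [inf_comm], by rwa [inf_comm], ?_⟩
  rw [sup_comm]
  exact isClosed_orthogonal_sup hV hW hclosed

theorem CommensurableSubspaces.sup_left {V W : Submodule ℝ H} (h : CommensurableSubspaces V W)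
    (V' : Submodule ℝ H) [FiniteDimensional ℝ V'] : CommensurableSubspaces (V ⊔ V') W := by
  obtain ⟨hker, hcoker, hclosed⟩ := h
  refine ⟨finiteDimensional_sup_inf V V' Wᗮ,
    finiteDimensional_of_le (inf_le_inf_right W (orthogonal_le le_sup_left)), ?_⟩
  rw [sup_right_comm]
  exact isClosed_sup_finiteDimensional _ V' hclosed

theorem relDim_sup_left [CompleteSpace H] {V W V' : Submodule ℝ H} (hW : IsClosed (W : Set H))
    (h : CommensurableSubspaces V W) [FiniteDimensional ℝ V'] (hV' : V' ≤ Vᗮ) :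
    relDim (V ⊔ V') W = relDim V W + finrank ℝ V' := by
  obtain ⟨hker, hcoker, hclosed⟩ := h
  have := hW.completeSpace_coe
  have := hclosed.completeSpace_coe
  have hS : (V ⊔ Wᗮ)ᗮ = Vᗮ ⊓ W := by rw [← inf_orthogonal, orthogonal_orthogonal]
  have hkernel := finrank_sup_inf_of_disjoint V V' Wᗮ ((orthogonal_disjoint V).mono_right hV')
  have hcokernel := finrank_inf_orthogonal_add_finrank V' (Vᗮ ⊓ W)
  rw [← hS, orthogonal_orthogonal] at hcokernel
  rw [relDim, relDim, ← inf_orthogonal, inf_right_comm, ← hS, hkernel]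
  omega

end Commensurable

/-- **Additivity of the relative dimension under finite-dimensional orthogonal
extensions.** If `V, W` are closed commensurable subspaces and `V' ⊆ V^⊥`, `W' ⊆ W^⊥` are
finite-dimensional, then `V + V'` and `W + W'` are closed and commensurable, and
`dim_{W+W'}(V+V') = dim_W(V) + dim V' − dim W'`. -/
theorem relDim_sup_finiteDimensional
    {H : Type*} [NormedAddCommGroup H] [InnerProductSpace ℝ H] [CompleteSpace H]
    (V W V' W' : Submodule ℝ H)
    (hVc : IsClosed (V : Set H)) (hWc : IsClosed (W : Set H))
    [FiniteDimensional ℝ V'] [FiniteDimensional ℝ W']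
    (hV' : V' ≤ Vᗮ) (hW' : W' ≤ Wᗮ)
    (hcom : CommensurableSubspaces V W) :
    IsClosed ((V ⊔ V' : Submodule ℝ H) : Set H) ∧
    IsClosed ((W ⊔ W' : Submodule ℝ H) : Set H) ∧
    CommensurableSubspaces (V ⊔ V') (W ⊔ W') ∧
    relDim (V ⊔ V') (W ⊔ W')
      = relDim V W + (Module.finrank ℝ V' : ℤ) - (Module.finrank ℝ W' : ℤ) := by
  have hV₁ := isClosed_sup_finiteDimensional V V' hVc
  have hW₁ := isClosed_sup_finiteDimensional W W' hWc
  have hcom₁ : CommensurableSubspaces W (V ⊔ V') := (hcom.sup_left V').symm hV₁ hWc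
  have hcom₂ : CommensurableSubspaces (W ⊔ W') (V ⊔ V') := hcom₁.sup_left W'
  refine ⟨hV₁, hW₁, hcom₂.symm hW₁ hV₁, ?_⟩
  have hV'_dim := relDim_sup_left hWc hcom hV'
  have hW'_dim := relDim_sup_left hV₁ hcom₁ hW'
  have := relDim_comm (V ⊔ V') (W ⊔ W')
  have := relDim_comm (V ⊔ V') W
  omega
end

section
/- Let H be a Hilbert space, S a bounded self-adjoint Fredholm operator, B = ⟨S·,·⟩ the associated Fredholm symmetric bilinear form, and W ⊆ H a closed subspace such that: (a) B|_W is strongly negative definite (there is k > 0 with −B(x,x) ≥ k‖x‖² for x ∈ W), and (b) B is positive semi-definite on the B-orthogonal complement W^{⊥_B} = S⁻¹(W^⊥). Then W is commensurable with the negative eigenspace V⁻(S) of S, and dim_W(V⁻(S)) = 0. -/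
open scoped RealInnerProductSpace

/-! The form `⟪S ·, ·⟫` is negative on `W` and nonnegative on `Vnegᗮ`, so `W ⊓ Vnegᗮ = ⊥`.
Being strongly negative on `Vneg`, `S` maps `Vneg` onto itself, so each `x ∈ Vneg ⊓ Wᗮ` is
`S v` with `v ∈ Vneg ∩ S⁻¹(Wᗮ)`, where the form is both strongly negative and nonnegative;
hence `Vneg ⊓ Wᗮ = ⊥`. Writing `P` for the orthogonal projection onto `Vneg`, the `S`-invariance
of `Vneg` gives `k‖w‖² ≤ -⟪S w, w⟫ ≤ -⟪S w, P w⟫ ≤ ‖S‖ ‖w‖ ‖P w‖` on `W`, so `P` is bounded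
below on `W`. Its range is then closed, with trivial orthogonal complement `Vneg ⊓ Wᗮ` inside
`Vneg`, so `P W = Vneg` and `W + Vnegᗮ = H`. Thus `W` is an algebraic complement of `Vnegᗮ`,
which makes both intersections in `CommensurableSubspaces` and `relDim` trivial. -/

theorem le_inv_mul_of_mul_sq_le {c a t : ℝ} (hc : 0 < c) (ha : 0 ≤ a) (ht : 0 ≤ t)
    (h : c * t ^ 2 ≤ a * t) : t ≤ c⁻¹ * a := by
  rw [inv_mul_eq_div, le_div_iff₀ hc]
  rcases ht.eq_or_lt with rfl | ht
  · simpa using ha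
  · nlinarith

section

variable {H : Type*} [NormedAddCommGroup H] [InnerProductSpace ℝ H]

theorem eq_zero_of_inner_nonneg_of_inner_le_neg_mul_norm_sq {c : ℝ} (hc : 0 < c) {x y : H}
    (h₀ : 0 ≤ ⟪y, x⟫) (h : ⟪y, x⟫ ≤ -c * ‖x‖ ^ 2) : x = 0 := by
  have : ‖x‖ ^ 2 ≤ 0 := by nlinarith
  simpa using this

theorem norm_le_inv_mul_of_mul_norm_sq_le_neg_inner {c : ℝ} (hc : 0 < c) {x y : H}
    (h : c * ‖x‖ ^ 2 ≤ -⟪y, x⟫) : ‖x‖ ≤ c⁻¹ * ‖y‖ := by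
  refine le_inv_mul_of_mul_sq_le hc (norm_nonneg y) (norm_nonneg x) (h.trans ?_)
  simpa [inner_neg_left] using real_inner_le_norm (-y) x

namespace Submodule

theorem map_eq_of_orthogonal_inf_eq_bot {E : Type*} [NormedAddCommGroup E] [NormedSpace ℝ E]
    [CompleteSpace H] {T : E →L[ℝ] H} {U : Submodule ℝ E} [CompleteSpace U] {V : Submodule ℝ H}
    {K : ℝ} (hT : ∀ x ∈ U, ‖x‖ ≤ K * ‖T x‖) (hUV : U.map (T : E →ₗ[ℝ] H) ≤ V)
    (h : (U.map (T : E →ₗ[ℝ] H))ᗮ ⊓ V = ⊥) :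
    U.map (T : E →ₗ[ℝ] H) = V := by
  have hA : AntilipschitzWith K.toNNReal (T ∘L U.subtypeL) :=
    ContinuousLinearMap.antilipschitz_of_bound _ fun x =>
      (hT x x.2).trans (mul_le_mul_of_nonneg_right (Real.le_coe_toNNReal K) (norm_nonneg _))
  have hclosed : IsClosed (U.map (T : E →ₗ[ℝ] H) : Set H) := by
    convert hA.isClosed_range (T ∘L U.subtypeL).uniformContinuous
    ext; simp
  have : CompleteSpace (U.map (T : E →ₗ[ℝ] H)) := hclosed.completeSpace_coe
  rw [← sup_orthogonal_inf_of_hasOrthogonalProjection hUV, h, sup_bot_eq]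

theorem orthogonal_map_starProjection_inf (V W : Submodule ℝ H) [V.HasOrthogonalProjection] :
    (W.map (V.starProjection : H →ₗ[ℝ] H))ᗮ ⊓ V = Wᗮ ⊓ V := by
  ext v
  refine and_congr_left fun hv => ?_
  have hP : ∀ w, ⟪V.starProjection w, v⟫ = ⟪w, v⟫ := fun w => by
    rw [inner_starProjection_left_eq_right, starProjection_eq_self_iff.2 hv]
  constructor
  · intro h w hw
    rw [← hP]
    exact h _ (mem_map_of_mem hw)
  · rintro h _ ⟨w, hw, rfl⟩
    rw [ContinuousLinearMap.coe_coe, hP]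
    exact h w hw

theorem map_starProjection_le_sup_orthogonal (V W : Submodule ℝ H) [V.HasOrthogonalProjection] :
    W.map (V.starProjection : H →ₗ[ℝ] H) ≤ W ⊔ Vᗮ := by
  rintro _ ⟨w, hw, rfl⟩
  refine mem_sup.2 ⟨w, hw, V.starProjection w - w, ?_, add_sub_cancel w _⟩
  rw [← neg_sub]
  exact neg_mem (sub_starProjection_mem_orthogonal w)


variable {S : H →L[ℝ] H} {V : Submodule ℝ H}

theorem map_eq_self_of_inner_le_neg_mul_norm_sq [CompleteSpace H] [CompleteSpace V]
    (hSV : ∀ x ∈ V, S x ∈ V) {c : ℝ} (hc : 0 < c) (hneg : ∀ x ∈ V, ⟪S x, x⟫ ≤ -c * ‖x‖ ^ 2) :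
    V.map (S : H →ₗ[ℝ] H) = V := by
  refine map_eq_of_orthogonal_inf_eq_bot (K := c⁻¹)
    (fun x hx => norm_le_inv_mul_of_mul_norm_sq_le_neg_inner hc (by linarith [hneg x hx]))
    (map_le_iff_le_comap.2 hSV) ((Submodule.eq_bot_iff _).2 ?_)
  rintro x ⟨hxo, hxV⟩
  have hSx : ⟪S x, x⟫ = 0 := hxo _ (mem_map_of_mem hxV)
  exact eq_zero_of_inner_nonneg_of_inner_le_neg_mul_norm_sq hc hSx.ge (hneg x hxV)

theorem inf_eq_bot_of_inner_le_neg_mul_norm_sq [CompleteSpace H] [CompleteSpace V]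
    (hSV : ∀ x ∈ V, S x ∈ V) {c : ℝ} (hc : 0 < c) (hneg : ∀ x ∈ V, ⟪S x, x⟫ ≤ -c * ‖x‖ ^ 2)
    {W : Submodule ℝ H} (hpos : ∀ x, S x ∈ W → 0 ≤ ⟪S x, x⟫) : V ⊓ W = ⊥ := by
  refine (Submodule.eq_bot_iff _).2 fun x ⟨hxV, hxW⟩ => ?_
  rw [← map_eq_self_of_inner_le_neg_mul_norm_sq hSV hc hneg] at hxV
  obtain ⟨v, hvV, rfl⟩ := hxV
  have hv : v = 0 :=
    eq_zero_of_inner_nonneg_of_inner_le_neg_mul_norm_sq hc (hpos v hxW) (hneg v hvV)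
  rw [hv, map_zero]

theorem inner_apply_self_eq_inner_starProjection_add [V.HasOrthogonalProjection]
    (hSV : ∀ x ∈ V, S x ∈ V) (x : H) :
    ⟪S x, x⟫ = ⟪S x, V.starProjection x⟫ +
      ⟪S (x - V.starProjection x), x - V.starProjection x⟫ := by
  set u := x - V.starProjection x
  have hPu : ⟪S (V.starProjection x), u⟫ = 0 := inner_right_of_mem_orthogonal
    (hSV _ (starProjection_apply_mem V x)) (sub_starProjection_mem_orthogonal x)
  calc ⟪S x, x⟫ = ⟪S x, V.starProjection x + u⟫ := by rw [add_sub_cancel]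
    _ = ⟪S x, V.starProjection x⟫ + ⟪S (V.starProjection x) + S u, u⟫ := by
      rw [inner_add_right, ← map_add, add_sub_cancel]
    _ = ⟪S x, V.starProjection x⟫ + ⟪S u, u⟫ := by rw [inner_add_left, hPu, zero_add]

theorem norm_le_mul_norm_starProjection [V.HasOrthogonalProjection] (hSV : ∀ x ∈ V, S x ∈ V)
    (hpos : ∀ u ∈ Vᗮ, 0 ≤ ⟪S u, u⟫) {k : ℝ} (hk : 0 < k) {x : H}
    (hx : k * ‖x‖ ^ 2 ≤ -⟪S x, x⟫) : ‖x‖ ≤ k⁻¹ * ‖S‖ * ‖V.starProjection x‖ := by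
  have hu := hpos _ (sub_starProjection_mem_orthogonal x)
  have hSxP : -⟪S x, V.starProjection x⟫ ≤ ‖S‖ * ‖V.starProjection x‖ * ‖x‖ := calc
    -⟪S x, V.starProjection x⟫ ≤ ‖S x‖ * ‖V.starProjection x‖ := by
      simpa [inner_neg_left] using real_inner_le_norm (-S x) (V.starProjection x)
    _ ≤ ‖S‖ * ‖x‖ * ‖V.starProjection x‖ := by gcongr; exact S.le_opNorm x
    _ = ‖S‖ * ‖V.starProjection x‖ * ‖x‖ := by ring
  rw [mul_assoc]
  refine le_inv_mul_of_mul_sq_le hk (by positivity) (norm_nonneg x) ?_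
  linarith [inner_apply_self_eq_inner_starProjection_add hSV x]

theorem sup_orthogonal_eq_top_of_mul_norm_sq_le_neg_inner [CompleteSpace H]
    [V.HasOrthogonalProjection] (hSV : ∀ x ∈ V, S x ∈ V) (hpos : ∀ u ∈ Vᗮ, 0 ≤ ⟪S u, u⟫)
    {W : Submodule ℝ H} [CompleteSpace W] {k : ℝ} (hk : 0 < k)
    (hW : ∀ x ∈ W, k * ‖x‖ ^ 2 ≤ -⟪S x, x⟫) (hVW : V ⊓ Wᗮ = ⊥) :
    W ⊔ Vᗮ = ⊤ := by
  have hmap : W.map (V.starProjection : H →ₗ[ℝ] H) = V := by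
    refine map_eq_of_orthogonal_inf_eq_bot
      (fun x hx => norm_le_mul_norm_starProjection hSV hpos hk (hW x hx)) ?_ ?_
    · exact map_le_iff_le_comap.2 fun x _ => starProjection_apply_mem V x
    · rw [orthogonal_map_starProjection_inf, inf_comm, hVW]
  rw [eq_top_iff, ← sup_orthogonal_of_hasOrthogonalProjection (K := V)]
  nth_rw 1 [← hmap]
  exact sup_le (map_starProjection_le_sup_orthogonal V W) le_sup_right

theorem orthogonal_inf_eq_bot_of_isCompl_orthogonal {V W : Submodule ℝ H}
    [V.HasOrthogonalProjection] (h : IsCompl W Vᗮ) : Wᗮ ⊓ V = ⊥ := by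
  rw [← orthogonal_orthogonal V, inf_orthogonal, h.sup_eq_top, top_orthogonal_eq_bot]

end Submodule

theorem commensurableSubspaces_of_isCompl_orthogonal {V W : Submodule ℝ H}
    [V.HasOrthogonalProjection] (h : IsCompl W Vᗮ) : CommensurableSubspaces W V := by
  refine ⟨?_, ?_, ?_⟩
  · rw [h.inf_eq_bot]
    infer_instance
  · rw [Submodule.orthogonal_inf_eq_bot_of_isCompl_orthogonal h]
    infer_instance
  · rw [h.sup_eq_top, Submodule.top_coe]
    exact isClosed_univ

theorem relDim_eq_zero_of_isCompl_orthogonal {V W : Submodule ℝ H}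
    [V.HasOrthogonalProjection] (h : IsCompl W Vᗮ) : relDim V W = 0 := by
  rw [relDim, inf_comm, Submodule.orthogonal_inf_eq_bot_of_isCompl_orthogonal h, inf_comm,
    h.inf_eq_bot]
  simp

end

theorem commensurable_negative_eigenspace_of_negative_definite_general
    {H : Type*} [NormedAddCommGroup H] [InnerProductSpace ℝ H] [CompleteSpace H]
    (S : H →L[ℝ] H)
    (Vneg : Submodule ℝ H) (hVc : IsClosed (Vneg : Set H))
    (hVinv : ∀ x ∈ Vneg, S x ∈ Vneg)
    (hVneg : ∃ c > 0, ∀ x ∈ Vneg, ⟪S x, x⟫ ≤ -c * ‖x‖ ^ 2)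
    (hVperp : ∀ x ∈ Vnegᗮ, S x ∈ Vnegᗮ ∧ 0 ≤ ⟪S x, x⟫)
    (W : Submodule ℝ H) (hWc : IsClosed (W : Set H))
    (ha : ∃ k > 0, ∀ x ∈ W, k * ‖x‖ ^ 2 ≤ -⟪S x, x⟫)
    (hb : ∀ x ∈ Submodule.comap (S.toLinearMap) Wᗮ, 0 ≤ ⟪S x, x⟫) :
    CommensurableSubspaces W Vneg ∧ relDim Vneg W = 0 := by
  obtain ⟨c, hc, hVneg⟩ := hVneg
  obtain ⟨k, hk, hW⟩ := ha
  have : CompleteSpace Vneg := hVc.completeSpace_coe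
  have : CompleteSpace W := hWc.completeSpace_coe
  have hVperp_nonneg : ∀ x ∈ Vnegᗮ, 0 ≤ ⟪S x, x⟫ := fun x hx => (hVperp x hx).2
  have hWV : W ⊓ Vnegᗮ = ⊥ := (Submodule.eq_bot_iff _).2 fun x ⟨hxW, hxV⟩ =>
    eq_zero_of_inner_nonneg_of_inner_le_neg_mul_norm_sq hk (hVperp_nonneg x hxV)
      (by linarith [hW x hxW])
  have hVW : Vneg ⊓ Wᗮ = ⊥ :=
    Submodule.inf_eq_bot_of_inner_le_neg_mul_norm_sq hVinv hc hVneg fun x hx => hb x hx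
  have hsup : W ⊔ Vnegᗮ = ⊤ := Submodule.sup_orthogonal_eq_top_of_mul_norm_sq_le_neg_inner
    hVinv hVperp_nonneg hk hW hVW
  have hcompl : IsCompl W Vnegᗮ := ⟨disjoint_iff.2 hWV, codisjoint_iff.2 hsup⟩
  exact ⟨commensurableSubspaces_of_isCompl_orthogonal hcompl,
    relDim_eq_zero_of_isCompl_orthogonal hcompl⟩

/-- **Commensurability with the negative spectral subspace.**
Let `S` be a bounded self-adjoint Fredholm operator on a Hilbert space, with negative
spectral subspace `Vneg` (characterized by: closed, `S`-invariant, `S` strongly negative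
on it, `S`-invariant orthocomplement on which `S` is positive semi-definite). If the form
`B = ⟪S·,·⟫` is strongly negative definite on a closed subspace `W` and positive
semi-definite on `W^{⊥_B} = S⁻¹(W^⊥)`, then `W` is commensurable with `Vneg` and
`dim_W(Vneg) = 0`. -/
theorem commensurable_negative_eigenspace_of_negative_definite
    {H : Type*} [NormedAddCommGroup H] [InnerProductSpace ℝ H] [CompleteSpace H]
    (S : H →L[ℝ] H)
    (hS : ∀ x y : H, ⟪S x, y⟫ = ⟪x, S y⟫)
    (hFred : FiniteDimensional ℝ (LinearMap.ker (S : H →ₗ[ℝ] H)) ∧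
      IsClosed ((LinearMap.range (S : H →ₗ[ℝ] H) : Submodule ℝ H) : Set H) ∧
      FiniteDimensional ℝ (H ⧸ LinearMap.range (S : H →ₗ[ℝ] H)))
    (Vneg : Submodule ℝ H) (hVc : IsClosed (Vneg : Set H))
    (hVinv : ∀ x ∈ Vneg, S x ∈ Vneg)
    (hVneg : ∃ c > 0, ∀ x ∈ Vneg, ⟪S x, x⟫ ≤ -c * ‖x‖ ^ 2)
    (hVperp : ∀ x ∈ Vnegᗮ, S x ∈ Vnegᗮ ∧ 0 ≤ ⟪S x, x⟫)
    (W : Submodule ℝ H) (hWc : IsClosed (W : Set H))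
    (ha : ∃ k > 0, ∀ x ∈ W, k * ‖x‖ ^ 2 ≤ -⟪S x, x⟫)
    (hb : ∀ x ∈ Submodule.comap (S.toLinearMap) Wᗮ, 0 ≤ ⟪S x, x⟫) :
    CommensurableSubspaces W Vneg ∧ relDim Vneg W = 0 :=
  commensurable_negative_eigenspace_of_negative_definite_general S Vneg hVc hVinv hVneg hVperp W hWc
    ha hb
end

section
/- Let B be a nondegenerate symmetric bilinear form on a real Hilbert space H which is realized by a compact perturbation of a positive isomorphism (so that n⁻(B) < ∞), and let Z ⊆ H be an isotropic subspace for B (B vanishes on Z × Z). Then n⁻(B) = n⁻(B|_{Z^{⊥_B}}) + dim(Z). -/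
open scoped RealInnerProductSpace

/-! On a subspace where `⟪S x, x⟫ ≤ 0`, coercivity of `P` gives `c ‖x‖² ≤ -⟪K x, x⟫`, so a
finite-rank operator `F` with `‖K - F‖ < c` is injective there: this bounds the index.

For `≤`, a negative definite subspace `E` maps to the dual of `Z` by `x ↦ ⟪S x, ·⟫`, with kernel
`E ∩ Z^{⊥_B}`. For `≥`, take `E₀ ⊆ Z^{⊥_B}` negative definite of maximal dimension. As `E₀ ∩ Z = 0`,
nondegeneracy yields a linear `η : Z → H` with `B(E₀, η z) = 0` and `B(z', η z) = ⟪z', z⟫` on `Z`.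
Then `B(x, x) ≤ B(e, e) - ‖z‖²` for `x = e + t z - η z` once `t` is large, so these `x` form a
negative definite subspace of dimension `dim E₀ + dim Z`. -/

open Module

section NegIndex

variable {V : Type*} [AddCommGroup V] [Module ℝ V] {B : V → V → ℝ} {D : ℕ}

theorem bddAbove_finrank_negDef
    (hD : ∀ E : Submodule ℝ V, (∀ x ∈ E, x ≠ 0 → B x x < 0) → finrank ℝ E ≤ D) (W : Set V) :
    BddAbove {n : ℕ | ∃ E : Submodule ℝ V, (E : Set V) ⊆ W ∧ finrank ℝ E = n ∧
      ∀ x ∈ E, x ≠ 0 → B x x < 0} :=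
  ⟨D, by rintro _ ⟨E, -, rfl, hE⟩; exact hD E hE⟩

theorem finrank_le_negIndexOn
    (hD : ∀ E : Submodule ℝ V, (∀ x ∈ E, x ≠ 0 → B x x < 0) → finrank ℝ E ≤ D)
    {W : Set V} {E : Submodule ℝ V} (hEW : (E : Set V) ⊆ W) (hE : ∀ x ∈ E, x ≠ 0 → B x x < 0) :
    finrank ℝ E ≤ negIndexOn B W :=
  le_csSup (bddAbove_finrank_negDef hD W) ⟨E, hEW, rfl, hE⟩

theorem exists_finrank_eq_negIndexOn
    (hD : ∀ E : Submodule ℝ V, (∀ x ∈ E, x ≠ 0 → B x x < 0) → finrank ℝ E ≤ D)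
    {W : Set V} (hW : (0 : V) ∈ W) :
    ∃ E : Submodule ℝ V, (E : Set V) ⊆ W ∧ finrank ℝ E = negIndexOn B W ∧
      ∀ x ∈ E, x ≠ 0 → B x x < 0 := by
  refine Nat.sSup_mem ?_ (bddAbove_finrank_negDef hD W)
  exact ⟨0, ⊥, by simpa using hW, finrank_bot ℝ V, by simp⟩

theorem finrank_le_negIndexOn_ker_add {M : Type*} [AddCommGroup M] [Module ℝ M]
    [FiniteDimensional ℝ M]
    (hD : ∀ E : Submodule ℝ V, (∀ x ∈ E, x ≠ 0 → B x x < 0) → finrank ℝ E ≤ D)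
    (f : V →ₗ[ℝ] M) (E : Submodule ℝ V) [FiniteDimensional ℝ E]
    (hE : ∀ x ∈ E, x ≠ 0 → B x x < 0) :
    finrank ℝ E ≤ negIndexOn B (LinearMap.ker f) + finrank ℝ M := by
  set g := f ∘ₗ E.subtype
  have hker : finrank ℝ (LinearMap.ker g) ≤ negIndexOn B (LinearMap.ker f) := by
    rw [← Submodule.finrank_map_subtype_eq]
    refine finrank_le_negIndexOn hD ?_ ?_
    · rintro _ ⟨x, hx, rfl⟩
      exact hx
    · rintro _ ⟨x, -, rfl⟩ hx
      exact hE x x.2 hx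
  have hrange := (LinearMap.range g).finrank_le
  have := g.finrank_range_add_finrank_ker
  omega

end NegIndex

section Hilbert

variable {H : Type*} [NormedAddCommGroup H] [InnerProductSpace ℝ H]

theorem Submodule.comap_orthogonal_eq_ker (Z : Submodule ℝ H) (T : H →ₗ[ℝ] H) :
    Zᗮ.comap T = LinearMap.ker (Z.subtype.dualMap ∘ₗ innerₗ H ∘ₗ T) := by
  ext x
  simp only [Submodule.mem_comap, Submodule.mem_orthogonal', LinearMap.mem_ker]
  constructor
  · intro h
    ext z
    simpa using h z z.2
  · intro h z hz
    simpa using LinearMap.congr_fun h ⟨z, hz⟩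

theorem IsCompactOperator.exists_finiteDimensional_range_opNorm_sub_le {K : H →L[ℝ] H}
    (hK : IsCompactOperator K) {ε : ℝ} (hε : 0 < ε) :
    ∃ F : H →L[ℝ] H, FiniteDimensional ℝ (LinearMap.range (F : H →ₗ[ℝ] H)) ∧ ‖K - F‖ ≤ ε := by
  obtain ⟨t, htf, hcover⟩ := Metric.totallyBounded_iff.mp
    ((hK.isCompact_closure_image_closedBall 1).totallyBounded.subset subset_closure) ε hε
  set U := Submodule.span ℝ t
  have : FiniteDimensional ℝ U := .span_of_finite ℝ htf
  refine ⟨U.starProjection ∘L K, ?_, ?_⟩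
  · refine Submodule.finiteDimensional_of_le (S₂ := U) ?_
    rintro _ ⟨x, rfl⟩
    exact Submodule.coe_mem _
  · refine ContinuousLinearMap.opNorm_le_of_unit_norm hε.le fun x hx => ?_
    obtain ⟨y, hyt, hy⟩ : ∃ y ∈ t, dist (K x) y < ε := by
      simpa using hcover ⟨x, by simp [hx], rfl⟩
    calc ‖(K - U.starProjection ∘L K) x‖ = ‖K x - U.starProjection (K x)‖ := rfl
      _ ≤ ‖K x - y‖ := by
        rw [Submodule.starProjection_minimal]
        exact ciInf_le ⟨0, by rintro _ ⟨z, rfl⟩; positivity⟩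
          (⟨y, Submodule.subset_span hyt⟩ : U)
      _ ≤ ε := by rw [← dist_eq_norm]; exact hy.le

theorem exists_finrank_le_of_inner_map_self_nonpos {S P K : H →L[ℝ] H} (hSPK : S = P + K)
    {c : ℝ} (hc : 0 < c) (hP : ∀ x, c * ‖x‖ ^ 2 ≤ ⟪P x, x⟫) (hK : IsCompactOperator K) :
    ∃ D : ℕ, ∀ E : Submodule ℝ H, (∀ x ∈ E, ⟪S x, x⟫ ≤ 0) →
      FiniteDimensional ℝ E ∧ finrank ℝ E ≤ D := by
  obtain ⟨F, hF, hKF⟩ := hK.exists_finiteDimensional_range_opNorm_sub_le (half_pos hc)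
  refine ⟨finrank ℝ (LinearMap.range (F : H →ₗ[ℝ] H)), fun E hE => ?_⟩
  have hinj : Function.Injective ((F : H →ₗ[ℝ] H).rangeRestrict ∘ₗ E.subtype) := by
    rw [← LinearMap.ker_eq_bot, LinearMap.ker_eq_bot']
    rintro ⟨x, hxE⟩ hx
    have hFx : F x = 0 := congrArg Subtype.val hx
    have hsq : c * ‖x‖ ^ 2 ≤ c / 2 * ‖x‖ ^ 2 := calc
      c * ‖x‖ ^ 2 ≤ ⟪P x, x⟫ := hP x
      _ = ⟪S x, x⟫ - ⟪(K - F) x, x⟫ := by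
        simp [hSPK, hFx, inner_add_left]
      _ ≤ ‖K - F‖ * ‖x‖ * ‖x‖ := by
        have := (abs_le.mp (abs_real_inner_le_norm ((K - F) x) x)).1
        have := (K - F).le_opNorm x
        nlinarith [hE x hxE, norm_nonneg x]
      _ ≤ c / 2 * ‖x‖ ^ 2 := by nlinarith [norm_nonneg x]
    have : ‖x‖ ^ 2 = 0 := le_antisymm (by nlinarith) (sq_nonneg _)
    simpa using this
  exact ⟨.of_injective _ hinj, LinearMap.finrank_le_finrank_of_injective hinj⟩

theorem exists_inner_map_rightInverse {S : H →L[ℝ] H} (hnd : ∀ x, (∀ y, ⟪S x, y⟫ = 0) → x = 0)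
    {U : Type*} [AddCommGroup U] [Module ℝ U] [FiniteDimensional ℝ U] {j : U →ₗ[ℝ] H}
    (hj : Function.Injective j) :
    ∃ g : Module.Dual ℝ U →ₗ[ℝ] H, ∀ φ u, ⟪S (j u), g φ⟫ = φ u := by
  set pairing : H →ₗ[ℝ] Module.Dual ℝ U := (innerₗ H ∘ₗ S.toLinearMap ∘ₗ j).flip
  have hsurj : Function.Surjective pairing := by
    rw [← LinearMap.flip_injective_iff₂, injective_iff_map_eq_zero]
    intro u hu
    exact hj.eq_iff' j.map_zero |>.mp <| hnd _ fun y => LinearMap.congr_fun hu y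
  obtain ⟨g, hg⟩ := pairing.exists_rightInverse_of_surjective (LinearMap.range_eq_top.2 hsurj)
  exact ⟨g, fun φ u => LinearMap.congr_fun (LinearMap.congr_fun hg φ) u⟩

theorem exists_inner_map_le_mul_norm_sq (S : H →L[ℝ] H) {U : Type*} [NormedAddCommGroup U]
    [NormedSpace ℝ U] [FiniteDimensional ℝ U] (η : U →ₗ[ℝ] H) :
    ∃ C : ℝ, ∀ u, ⟪S (η u), η u⟫ ≤ C * ‖u‖ ^ 2 := by
  set η' := LinearMap.toContinuousLinearMap η
  refine ⟨‖S‖ * ‖η'‖ ^ 2, fun u => ?_⟩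
  have hη : ‖η u‖ ≤ ‖η'‖ * ‖u‖ := η'.le_opNorm u
  calc ⟪S (η u), η u⟫ ≤ ‖S‖ * ‖η u‖ * ‖η u‖ := by
        refine (real_inner_le_norm _ _).trans ?_
        gcongr
        exact S.le_opNorm _
    _ ≤ ‖S‖ * (‖η'‖ * ‖u‖) * (‖η'‖ * ‖u‖) := by gcongr
    _ = ‖S‖ * ‖η'‖ ^ 2 * ‖u‖ ^ 2 := by ring

theorem exists_negDef_finrank_eq_add_of_isotropic {S : H →L[ℝ] H}
    (hS : ∀ x y, ⟪S x, y⟫ = ⟪x, S y⟫) (hnd : ∀ x, (∀ y, ⟪S x, y⟫ = 0) → x = 0)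
    {Z : Submodule ℝ H} [FiniteDimensional ℝ Z] (hiso : ∀ x ∈ Z, ∀ y ∈ Z, ⟪S x, y⟫ = 0)
    {E : Submodule ℝ H} [FiniteDimensional ℝ E] (hEZ : E ≤ Zᗮ.comap S.toLinearMap)
    (hE : ∀ x ∈ E, x ≠ 0 → ⟪S x, x⟫ < 0) :
    ∃ E' : Submodule ℝ H, finrank ℝ E' = finrank ℝ E + finrank ℝ Z ∧
      ∀ x ∈ E', x ≠ 0 → ⟪S x, x⟫ < 0 := by
  have hsymm : ∀ x y, ⟪S x, y⟫ = ⟪S y, x⟫ := fun x y => by rw [hS, real_inner_comm]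
  have hdisj : Disjoint E Z := by
    refine Submodule.disjoint_def.2 fun x hxE hxZ => ?_
    by_contra hx
    exact (hE x hxE hx).ne (hiso x hxZ x hxZ)
  have hj : Function.Injective (E.subtype.coprod Z.subtype) := by
    rw [← LinearMap.ker_eq_bot, LinearMap.ker_coprod_of_disjoint_range _ _ (by simpa using hdisj)]
    simp
  obtain ⟨g, hg⟩ := exists_inner_map_rightInverse hnd hj
  set η : Z →ₗ[ℝ] H := g ∘ₗ (LinearMap.snd ℝ E Z).dualMap ∘ₗ innerₗ Z
  have hηE : ∀ (e : E) z, ⟪S e, η z⟫ = 0 := fun e z => by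
    simpa [η] using hg ((LinearMap.snd ℝ E Z).dualMap (innerₗ Z z)) (e, 0)
  have hηZ : ∀ z : Z, ⟪S z, η z⟫ = ‖z‖ ^ 2 := fun z => by
    simpa [η, real_inner_self_eq_norm_sq] using
      hg ((LinearMap.snd ℝ E Z).dualMap (innerₗ Z z)) (0, z)
  obtain ⟨C, hC⟩ := exists_inner_map_le_mul_norm_sq S η
  set t := (C + 1) / 2
  set f : E × Z →ₗ[ℝ] H := E.subtype.coprod (t • Z.subtype - η)
  have hf : ∀ p : E × Z, ⟪S (f p), f p⟫ ≤ ⟪S p.1, p.1⟫ - ‖p.2‖ ^ 2 := by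
    rintro ⟨e, z⟩
    have hez : ⟪S e, z⟫ = 0 := (Submodule.mem_orthogonal' _ _).1 (hEZ e.2) z z.2
    have hzz : ⟪S z, z⟫ = 0 := hiso z z.2 z z.2
    have := hC z
    simp only [f, LinearMap.coprod_apply, Submodule.subtype_apply, LinearMap.sub_apply,
      LinearMap.smul_apply, map_add, map_sub, map_smul, inner_add_left, inner_add_right,
      inner_sub_left, inner_sub_right, real_inner_smul_left, real_inner_smul_right]
    rw [hsymm z e, hsymm (η z) e, hsymm (η z) z, hez, hzz, hηE, hηZ]
    simp only [t]
    linarith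
  have hneg : ∀ p ≠ 0, ⟪S (f p), f p⟫ < 0 := by
    rintro ⟨e, z⟩ hp
    refine (hf (e, z)).trans_lt ?_
    rcases eq_or_ne z 0 with rfl | hz
    · have he : (e : H) ≠ 0 := by simpa using hp
      simpa using hE e e.2 he
    · have he : ⟪S e, e⟫ ≤ 0 := by
        rcases eq_or_ne (e : H) 0 with he | he
        · simp [he]
        · exact (hE e e.2 he).le
      have : 0 < ‖z‖ := norm_pos_iff.2 hz
      dsimp only
      nlinarith
  have hfinj : Function.Injective f := (injective_iff_map_eq_zero f).2 fun p hp => by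
    by_contra h
    simpa [hp] using hneg p h
  refine ⟨LinearMap.range f, by rw [LinearMap.finrank_range_of_inj hfinj, finrank_prod], ?_⟩
  rintro _ ⟨p, rfl⟩ hp
  exact hneg p (by rintro rfl; simp at hp)

end Hilbert

theorem index_eq_index_on_isotropic_perp_add_dim_general
    {H : Type*} [NormedAddCommGroup H] [InnerProductSpace ℝ H]
    (S : H →L[ℝ] H)
    (hS : ∀ x y : H, ⟪S x, y⟫ = ⟪x, S y⟫)
    (hRCPPI : ∃ P K : H →L[ℝ] H, S = P + K ∧
      (∀ x y : H, ⟪P x, y⟫ = ⟪x, P y⟫) ∧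
      (∃ c > 0, ∀ x : H, c * ‖x‖ ^ 2 ≤ ⟪P x, x⟫) ∧
      Function.Bijective ⇑P ∧ IsCompactOperator ⇑K)
    (hnd : ∀ x : H, (∀ y : H, ⟪S x, y⟫ = 0) → x = 0)
    (Z : Submodule ℝ H)
    (hiso : ∀ x ∈ Z, ∀ y ∈ Z, ⟪S x, y⟫ = 0) :
    negIndexOn (fun x y => ⟪S x, y⟫) Set.univ
      = negIndexOn (fun x y => ⟪S x, y⟫) ↑(Submodule.comap S.toLinearMap Zᗮ)
        + Module.finrank ℝ Z := by
  obtain ⟨P, K, hSPK, -, ⟨c, hc, hP⟩, -, hK⟩ := hRCPPI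
  obtain ⟨D, hD⟩ := exists_finrank_le_of_inner_map_self_nonpos hSPK hc hP hK
  have hDneg : ∀ E : Submodule ℝ H, (∀ x ∈ E, x ≠ 0 → ⟪S x, x⟫ < 0) →
      FiniteDimensional ℝ E ∧ finrank ℝ E ≤ D := fun E hE => hD E fun x hx => by
    rcases eq_or_ne x 0 with rfl | hx0
    · simp
    · exact (hE x hx hx0).le
  have hbound := fun E h => (hDneg E h).2
  have : FiniteDimensional ℝ Z := (hD Z fun x hx => (hiso x hx x hx).le).1
  apply le_antisymm
  · obtain ⟨E, -, hE, hEneg⟩ := exists_finrank_eq_negIndexOn hbound (Set.mem_univ (0 : H))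
    have : FiniteDimensional ℝ E := (hDneg E hEneg).1
    rw [← hE, Z.comap_orthogonal_eq_ker, ← Subspace.dual_finrank_eq (V := Z)]
    exact finrank_le_negIndexOn_ker_add hbound
      (Z.subtype.dualMap ∘ₗ innerₗ H ∘ₗ S.toLinearMap) E hEneg
  · obtain ⟨E₀, hE₀W, hE₀, hE₀neg⟩ :=
      exists_finrank_eq_negIndexOn hbound (Zᗮ.comap S.toLinearMap).zero_mem
    have : FiniteDimensional ℝ E₀ := (hDneg E₀ hE₀neg).1
    obtain ⟨E', hE', hE'neg⟩ := exists_negDef_finrank_eq_add_of_isotropic hS hnd hiso hE₀W hE₀neg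
    rw [← hE₀, ← hE']
    exact finrank_le_negIndexOn hbound (Set.subset_univ _) hE'neg

/-- **Index and isotropic subspaces.** Let `B = ⟪S·,·⟫` be a nondegenerate symmetric
bilinear form on a Hilbert space realized by a compact perturbation of a positive
isomorphism (so `n⁻(B) < ∞`), and let `Z` be an isotropic subspace for `B`. Then
`n⁻(B) = n⁻(B|_{Z^{⊥_B}}) + dim Z`. -/
theorem index_eq_index_on_isotropic_perp_add_dim
    {H : Type*} [NormedAddCommGroup H] [InnerProductSpace ℝ H] [CompleteSpace H]
    (S : H →L[ℝ] H)
    (hS : ∀ x y : H, ⟪S x, y⟫ = ⟪x, S y⟫)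
    (hRCPPI : ∃ P K : H →L[ℝ] H, S = P + K ∧
      (∀ x y : H, ⟪P x, y⟫ = ⟪x, P y⟫) ∧
      (∃ c > 0, ∀ x : H, c * ‖x‖ ^ 2 ≤ ⟪P x, x⟫) ∧
      Function.Bijective ⇑P ∧ IsCompactOperator ⇑K)
    (hnd : ∀ x : H, (∀ y : H, ⟪S x, y⟫ = 0) → x = 0)
    (Z : Submodule ℝ H)
    (hiso : ∀ x ∈ Z, ∀ y ∈ Z, ⟪S x, y⟫ = 0) :
    negIndexOn (fun x y => ⟪S x, y⟫) Set.univ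
      = negIndexOn (fun x y => ⟪S x, y⟫) ↑(Submodule.comap S.toLinearMap Zᗮ)
        + Module.finrank ℝ Z :=
  index_eq_index_on_isotropic_perp_add_dim_general S hS hRCPPI hnd Z hiso
end
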